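/- arXiv:0710.3975 — 8 statements merged into one kernel-verified Lean document; each statement's English description precedes it below -/
import Mathlib

section
/- Let K be a group, S a subset of K generating K (Subgroup.closure S = ⊤), and k ≥ 1. Then every right-nested commutator ⁅y₁, ⁅y₂, …, ⁅y_k, y_{k+1}⁆…⁆⁆ of arbitrary elements y₁, …, y_{k+1} ∈ K lies in the normal closure in K of the set of right-nested commutators ⁅x₁, ⁅x₂, …, ⁅x_k, x_{k+1}⁆…⁆⁆ all of whose entries x₁, …, x_{k+1} belong to S ∪ S⁻¹. -/
/-!
Induction on `k`, for an arbitrary normal subgroup `M` in place of the normal closure and an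
arbitrary generating set `T` in place of `S ∪ S⁻¹`. If the nested commutators with entries in `T`
lie in `M`, then in `G ⧸ M` every element `⁅t, c⁆` with `t ∈ T` and `c` a `k`-fold nested
commutator of elements of `T` is trivial, so such `c` centralise a generating set and are central.
The induction hypothesis, applied in `G ⧸ M` to the normal subgroup `center (G ⧸ M)`, makes all
`k`-fold nested commutators central in `G ⧸ M`, so all `(k+1)`-fold ones lie in `M`.
-/

open scoped commutatorElement

/-- The right-nested commutator `⁅y 0, ⁅y 1, …, ⁅y (k-1), y k⁆…⁆⁆` of `k+1` elements. -/
def rightNested {K : Type*} [Group K] : (k : ℕ) → (Fin (k + 1) → K) → K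
  | 0, y => y 0
  | k + 1, y => ⁅y 0, rightNested k (fun i => y i.succ)⁆

open Subgroup

theorem rightNested_succ {G : Type*} [Group G] (k : ℕ) (y : Fin (k + 2) → G) :
    rightNested (k + 1) y = ⁅y 0, rightNested k (Fin.tail y)⁆ :=
  rfl

theorem map_rightNested {G H : Type*} [Group G] [Group H] (f : G →* H) :
    ∀ (k : ℕ) (y : Fin (k + 1) → G), f (rightNested k y) = rightNested k (f ∘ y)
  | 0, _ => rfl
  | k + 1, y => by
    rw [rightNested_succ, rightNested_succ, map_commutatorElement, map_rightNested f k]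
    rfl

theorem Subgroup.center_eq_centralizer_of_closure_eq_top {G : Type*} [Group G] {s : Set G}
    (hs : closure s = ⊤) : center G = centralizer s := by
  rw [← centralizer_univ, ← coe_top, ← hs, centralizer_closure]

theorem rightNested_mem_of_forall_mem {G : Type*} [Group G] {T : Set G} (hT : closure T = ⊤)
    (k : ℕ) {M : Subgroup G} [M.Normal]
    (hM : ∀ x : Fin (k + 1) → G, (∀ i, x i ∈ T) → rightNested k x ∈ M)
    (y : Fin (k + 1) → G) : rightNested k y ∈ M := by
  induction k generalizing G with
  | zero =>
    have hTM : T ⊆ M := fun t ht => hM (fun _ => t) (fun _ => ht)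
    exact (closure_le M).2 hTM (hT ▸ mem_top _)
  | succ k ih =>
    set π := QuotientGroup.mk' M
    have hπT : closure (π '' T) = ⊤ := by
      rw [← MonoidHom.map_closure, hT, map_top_of_surjective π (QuotientGroup.mk'_surjective M)]
    have hcentral : ∀ z : Fin (k + 1) → G ⧸ M, (∀ i, z i ∈ π '' T) →
        rightNested k z ∈ center (G ⧸ M) := by
      intro z hz
      obtain ⟨x, hxT, rfl⟩ : ∃ x : Fin (k + 1) → G, (∀ i, x i ∈ T) ∧ π ∘ x = z := by
        choose x hxT hπx using hz
        exact ⟨x, hxT, funext hπx⟩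
      rw [← map_rightNested, center_eq_centralizer_of_closure_eq_top hπT, mem_centralizer_iff]
      rintro _ ⟨t, ht, rfl⟩
      have hmem : rightNested (k + 1) (Fin.cons t x) ∈ M := hM _ (Fin.cases ht hxT)
      rw [← QuotientGroup.eq_one_iff, rightNested_succ] at hmem
      exact commutatorElement_eq_one_iff_mul_comm.1 hmem
    have hy := ih hπT hcentral (Fin.tail (π ∘ y))
    rw [← QuotientGroup.eq_one_iff]
    change π (rightNested (k + 1) y) = 1
    rw [map_rightNested, rightNested_succ, commutatorElement_eq_one_iff_mul_comm]
    exact mem_center_iff.1 hy _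

theorem rightNested_mem_normalClosure {G : Type*} [Group G] {T : Set G} (hT : closure T = ⊤)
    (k : ℕ) (y : Fin (k + 1) → G) :
    rightNested k y ∈
      normalClosure {g | ∃ x : Fin (k + 1) → G, (∀ i, x i ∈ T) ∧ g = rightNested k x} := by
  refine rightNested_mem_of_forall_mem hT k (fun x hx => ?_) y
  exact subset_normalClosure ⟨x, hx, rfl⟩

theorem stmt0_general {K : Type*} [Group K] (S : Set K) (hS : Subgroup.closure S = ⊤)
    (k : ℕ) (y : Fin (k + 1) → K) :
    rightNested k y ∈ Subgroup.normalClosure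
      {g : K | ∃ x : Fin (k + 1) → K, (∀ i, x i ∈ S ∪ S⁻¹) ∧ g = rightNested k x} :=
  rightNested_mem_normalClosure (top_le_iff.1 (hS ▸ closure_mono Set.subset_union_left)) k y

theorem stmt0 {K : Type*} [Group K] (S : Set K) (hS : Subgroup.closure S = ⊤)
    (k : ℕ) (hk : 1 ≤ k) (y : Fin (k + 1) → K) :
    rightNested k y ∈ Subgroup.normalClosure
      {g : K | ∃ x : Fin (k + 1) → K, (∀ i, x i ∈ S ∪ S⁻¹) ∧ g = rightNested k x} :=
  stmt0_general S hS k y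
end

section
/- Let K be a group, S a subset of K generating K (Subgroup.closure S = ⊤), and k ≥ 1. Then K is nilpotent of class at most k, i.e. lowerCentralSeries K k = ⊥, if and only if every right-nested commutator ⁅x₁, ⁅x₂, …, ⁅x_k, x_{k+1}⁆…⁆⁆ whose entries x₁, …, x_{k+1} all belong to S ∪ S⁻¹ equals the identity element of K. -/
/-!
A right-nested commutator of `k + 1` elements lies in `lowerCentralSeries k`, which gives one
direction. Conversely, peel off the innermost commutator: if every nested commutator of `n`
generators followed by `w` vanishes, then each `⁅s, w⁆` with `s ∈ S` satisfies the same
hypothesis for `n - 1`, so by induction it lies in `upperCentralSeries (n - 1)`. As that term is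
normal, the `g` with `⁅w, g⁆ ∈ upperCentralSeries (n - 1)` form a subgroup; it contains `S`, hence
is everything, i.e. `w ∈ upperCentralSeries n`. So `upperCentralSeries k` contains `S` and is `⊤`,
which is equivalent to `lowerCentralSeries k = ⊥`.
-/

open scoped commutatorElement

theorem Fin.init_cons {α : Type*} {n : ℕ} (a : α) (q : Fin (n + 1) → α) :
    Fin.init (Fin.cons a q : Fin (n + 2) → α) = Fin.cons a (Fin.init q) := by
  ext i
  cases i using Fin.cases <;> rfl

section

variable {G : Type*} [Group G]

theorem Subgroup.commutatorElement_mem_of_closure_eq_top {N : Subgroup G} [N.Normal]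
    {S : Set G} (hS : closure S = ⊤) {w : G} (h : ∀ s ∈ S, ⁅w, s⁆ ∈ N) (g : G) :
    ⁅w, g⁆ ∈ N := by
  let f := QuotientGroup.mk' N
  have mem_iff : ∀ y, ⁅w, y⁆ ∈ N ↔ y ∈ (centralizer {f w}).comap f := fun y => by
    rw [mem_comap, mem_centralizer_singleton_iff, ← QuotientGroup.eq_one_iff (N := N),
      ← QuotientGroup.mk'_apply, map_commutatorElement, commutatorElement_eq_one_iff_mul_comm,
      eq_comm]
  have closure_le_comap : closure S ≤ (centralizer {f w}).comap f :=
    (closure_le _).mpr fun s hs => (mem_iff s).mp (h s hs)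
  exact (mem_iff g).mpr (closure_le_comap (hS ▸ mem_top g))

theorem rightNested_mem_lowerCentralSeries :
    ∀ (k : ℕ) (x : Fin (k + 1) → G), rightNested k x ∈ (⊤ : Subgroup G).lowerCentralSeries k
  | 0, _ => Subgroup.mem_top _
  | k + 1, x => by
    rw [Subgroup.lowerCentralSeries_succ, Subgroup.commutator_comm]
    exact Subgroup.commutator_mem_commutator (Subgroup.mem_top _)
      (rightNested_mem_lowerCentralSeries k _)

theorem rightNested_cons (k : ℕ) (a : G) (y : Fin (k + 1) → G) :
    rightNested (k + 1) (Fin.cons a y) = ⁅a, rightNested k y⁆ :=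
  rfl

theorem rightNested_succ_snoc :
    ∀ (n : ℕ) (x : Fin (n + 1) → G) (w : G),
      rightNested (n + 1) (Fin.snoc x w) =
        rightNested n (Fin.snoc (Fin.init x) ⁅x (Fin.last n), w⁆)
  | 0, x, w => by simp [rightNested, Fin.snoc]
  | n + 1, x, w => by
    induction x using Fin.consCases with
    | cons a q =>
      rw [← Fin.cons_snoc_eq_snoc_cons, rightNested_cons, rightNested_succ_snoc n q w,
        Fin.cons_last, Fin.init_cons, ← Fin.cons_snoc_eq_snoc_cons, rightNested_cons]

theorem mem_upperCentralSeries_of_rightNested_snoc_eq_one {S : Set G}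
    (hS : Subgroup.closure S = ⊤) :
    ∀ (n : ℕ) (w : G), (∀ x : Fin n → G, (∀ i, x i ∈ S) → rightNested n (Fin.snoc x w) = 1) →
      w ∈ Subgroup.upperCentralSeries G n
  | 0, w, h => Subgroup.mem_bot.mpr (h Fin.elim0 fun i => i.elim0)
  | n + 1, w, h => by
    refine Subgroup.mem_upperCentralSeries_succ_iff.mpr <|
      Subgroup.commutatorElement_mem_of_closure_eq_top hS fun s hs => ?_
    rw [← inv_mem_iff, commutatorElement_inv]
    refine mem_upperCentralSeries_of_rightNested_snoc_eq_one hS n _ fun x hx => ?_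
    have hxs := h (Fin.snoc x s) (Fin.lastCases (by simpa using hs) fun i => by simpa using hx i)
    rwa [rightNested_succ_snoc, Fin.init_snoc, Fin.snoc_last] at hxs

end

theorem stmt1_general {K : Type*} [Group K] (S : Set K) (hS : Subgroup.closure S = ⊤)
    (k : ℕ) :
    (⊤ : Subgroup K).lowerCentralSeries k = ⊥ ↔
      ∀ x : Fin (k + 1) → K, (∀ i, x i ∈ S ∪ S⁻¹) → rightNested k x = 1 := by
  refine ⟨fun h x _ => by simpa [h] using rightNested_mem_lowerCentralSeries k x, fun h => ?_⟩
  rw [Subgroup.lowerCentralSeries_eq_bot_iff_upperCentralSeries_eq_top, eq_top_iff, ← hS,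
    Subgroup.closure_le]
  intro s hs
  refine mem_upperCentralSeries_of_rightNested_snoc_eq_one hS k s fun x hx => h _ ?_
  exact Fin.lastCases (by simpa using .inl hs) fun i => by simpa using .inl (hx i)

theorem stmt1 {K : Type*} [Group K] (S : Set K) (hS : Subgroup.closure S = ⊤)
    (k : ℕ) (hk : 1 ≤ k) :
    (⊤ : Subgroup K).lowerCentralSeries k = ⊥ ↔
      ∀ x : Fin (k + 1) → K, (∀ i, x i ∈ S ∪ S⁻¹) → rightNested k x = 1 :=
  stmt1_general S hS k
end

section
/- Let p be a prime, n ≥ 1, and let ζ be a unit of ZMod p whose multiplicative order is exactly n. Let σ and τ be the (ZMod p)-algebra automorphisms of the polynomial ring A = (ZMod p)[X,Y] determined by σ(X) = Y, σ(Y) = X and τ(X) = ζ·X, τ(Y) = ζ⁻¹·Y. Then the subalgebra of A consisting of elements fixed by both σ and τ (equivalently, the ring of invariants of the dihedral group of order 2n generated by σ and τ) equals Algebra.adjoin (ZMod p) {X*Y, X^n + Y^n}. -/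
open MvPolynomial

/-- The algebra automorphism `σ` of `(ZMod p)[X,Y]` with `σ(X) = Y`, `σ(Y) = X`. -/
noncomputable def sigmaSwap (p : ℕ) :
    MvPolynomial (Fin 2) (ZMod p) →ₐ[ZMod p] MvPolynomial (Fin 2) (ZMod p) :=
  aeval ![X 1, X 0]

/-- The algebra automorphism `τ` of `(ZMod p)[X,Y]` with `τ(X) = ζ·X`, `τ(Y) = ζ⁻¹·Y`. -/
noncomputable def tauDiag (p : ℕ) (ζ : (ZMod p)ˣ) :
    MvPolynomial (Fin 2) (ZMod p) →ₐ[ZMod p] MvPolynomial (Fin 2) (ZMod p) :=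
  aeval ![C (ζ : ZMod p) * X 0, C ((ζ⁻¹ : (ZMod p)ˣ) : ZMod p) * X 1]

/-!
The automorphism `τ` multiplies the monomial `X^i Y^j` by `ζ^(i-j)`, so a `τ`-invariant polynomial
is supported on exponents with `i ≡ j [MOD n]`, and `σ`-invariance makes its coefficients
symmetric under `(i, j) ↦ (j, i)`. Hence an invariant `a` equals `u + σ u + δ`, where `u` collects
the monomials of `a` with `i > j` and `δ` those with `i = j`; this avoids dividing by `2`, which
matters when `p = 2`. Each orbit sum `X^i Y^j + X^j Y^i` with `i ≡ j [MOD n]` is `(XY)^j` times a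
power sum `X^(kn) + Y^(kn)`, which Newton's recurrence expresses through `XY` and `X^n + Y^n`,
and `X^i Y^i = (XY)^i`. Conversely both generators are visibly invariant.
-/

theorem pow_add_pow_mem {A S : Type*} [CommRing A] [SetLike S A] [SubringClass S A] {s : S}
    {x y : A} (hxy : x * y ∈ s) (hs : x + y ∈ s) (k : ℕ) : x ^ k + y ^ k ∈ s := by
  induction k using Nat.twoStepInduction with
  | zero => rw [pow_zero, pow_zero]; exact add_mem (one_mem s) (one_mem s)
  | one => simpa using hs
  | more k h0 h1 =>
    have newton : x ^ (k + 2) + y ^ (k + 2) =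
        (x ^ (k + 1) + y ^ (k + 1)) * (x + y) - x * y * (x ^ k + y ^ k) := by ring
    rw [newton]
    exact sub_mem (mul_mem h1 hs) (mul_mem hxy h0)

theorem pow_mul_pow_add_pow_mul_pow_mem {A S : Type*} [CommRing A] [SetLike S A]
    [SubringClass S A] {s : S} {x y : A} {n : ℕ} (hxy : x * y ∈ s) (hs : x ^ n + y ^ n ∈ s)
    {i j : ℕ} (hij : i ≡ j [MOD n]) : x ^ i * y ^ j + x ^ j * y ^ i ∈ s := by
  wlog hji : j ≤ i generalizing i j
  · simpa only [add_comm] using this hij.symm (le_of_not_ge hji)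
  obtain ⟨k, rfl⟩ : ∃ k, i = j + n * k := by
    obtain ⟨k, hk⟩ := (Nat.modEq_iff_dvd' hji).mp hij.symm
    exact ⟨k, by omega⟩
  have factor : x ^ (j + n * k) * y ^ j + x ^ j * y ^ (j + n * k) =
      (x * y) ^ j * ((x ^ n) ^ k + (y ^ n) ^ k) := by ring
  rw [factor]
  exact mul_mem (pow_mem hxy j) (pow_add_pow_mem (by rw [← mul_pow]; exact pow_mem hxy n) hs k)

namespace MvPolynomial

variable {R σ : Type*} [CommSemiring R]

noncomputable def filter (P : (σ →₀ ℕ) → Prop) [DecidablePred P] (φ : MvPolynomial σ R) :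
    MvPolynomial σ R :=
  ∑ d ∈ φ.support with P d, monomial d (coeff d φ)

theorem coeff_filter (P : (σ →₀ ℕ) → Prop) [DecidablePred P] (φ : MvPolynomial σ R)
    (d : σ →₀ ℕ) : coeff d (φ.filter P) = if P d then coeff d φ else 0 := by
  classical
  simp only [filter, coeff_sum, coeff_monomial, Finset.sum_ite_eq', Finset.mem_filter,
    mem_support_iff]
  by_cases h : coeff d φ = 0 <;> simp [h]

theorem mem_support_filter {P : (σ →₀ ℕ) → Prop} [DecidablePred P] {φ : MvPolynomial σ R}
    {d : σ →₀ ℕ} : d ∈ (φ.filter P).support ↔ d ∈ φ.support ∧ P d := by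
  simp only [mem_support_iff, coeff_filter]
  by_cases h : P d <;> simp [h, and_comm]

theorem map_mem_of_forall_monomial_mem {M : Type*} [AddCommMonoid M] [Module R M]
    (L : MvPolynomial σ R →ₗ[R] M) {S : Submodule R M} {φ : MvPolynomial σ R}
    (h : ∀ d ∈ φ.support, L (monomial d 1) ∈ S) : L φ ∈ S := by
  rw [φ.as_sum, map_sum]
  refine Submodule.sum_mem S fun d hd => ?_
  rw [← mul_one (coeff d φ), ← smul_eq_mul, ← smul_monomial, map_smul]
  exact S.smul_mem _ (h d hd)

theorem coeff_aeval_C_mul_X (u : σ → R) (φ : MvPolynomial σ R) (d : σ →₀ ℕ) :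
    coeff d (aeval (fun i => C (u i) * X i) φ) = (d.prod fun i k => u i ^ k) * coeff d φ := by
  classical
  induction φ using MvPolynomial.induction_on' with
  | monomial e c =>
    have : aeval (fun i => C (u i) * X i) (monomial e c) =
        monomial e ((e.prod fun i k => u i ^ k) * c) := by
      rw [aeval_monomial, monomial_eq]
      simp [mul_pow, Finsupp.prod_mul, map_finsuppProd, mul_comm, mul_left_comm]
    rw [this, coeff_monomial, coeff_monomial]
    split_ifs with h <;> simp [h]
  | add φ ψ hφ hψ => rw [map_add, coeff_add, coeff_add, hφ, hψ, mul_add]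

theorem monomial_one_fin_two (d : Fin 2 →₀ ℕ) :
    (monomial d 1 : MvPolynomial (Fin 2) R) = X 0 ^ d 0 * X 1 ^ d 1 := by
  rw [monomial_eq, C_1, one_mul, Finsupp.prod_fintype _ _ (fun _ => pow_zero _),
    Fin.prod_univ_two]

end MvPolynomial

section
variable {p : ℕ}

theorem sigmaSwap_eq_rename : sigmaSwap p = rename (Equiv.swap 0 1) := by
  ext i; fin_cases i <;> simp [sigmaSwap]

theorem coeff_sigmaSwap (φ : MvPolynomial (Fin 2) (ZMod p)) (d : Fin 2 →₀ ℕ) :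
    coeff d (sigmaSwap p φ) = coeff (d.equivMapDomain (Equiv.swap 0 1)) φ := by
  have := coeff_rename_mapDomain _ (Equiv.swap (0 : Fin 2) 1).injective φ
    (d.equivMapDomain (Equiv.swap 0 1))
  rwa [← Finsupp.equivMapDomain_eq_mapDomain, ← Finsupp.equivMapDomain_trans,
    Equiv.swap_swap, Finsupp.equivMapDomain_refl, ← sigmaSwap_eq_rename] at this

theorem tauDiag_eq_aeval (ζ : (ZMod p)ˣ) :
    tauDiag p ζ = aeval fun i => C ((![ζ, ζ⁻¹] i : (ZMod p)ˣ) : ZMod p) * X i := by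
  ext i; fin_cases i <;> simp [tauDiag]

theorem coeff_tauDiag (ζ : (ZMod p)ˣ) (φ : MvPolynomial (Fin 2) (ZMod p)) (d : Fin 2 →₀ ℕ) :
    coeff d (tauDiag p ζ φ) = ((ζ ^ d 0 * ζ⁻¹ ^ d 1 : (ZMod p)ˣ) : ZMod p) * coeff d φ := by
  rw [tauDiag_eq_aeval, coeff_aeval_C_mul_X, Finsupp.prod_fintype _ _ (fun _ => pow_zero _)]
  simp

theorem modEq_of_tauDiag_eq_self [Fact p.Prime] {ζ : (ZMod p)ˣ}
    {a : MvPolynomial (Fin 2) (ZMod p)} (h : tauDiag p ζ a = a) {d : Fin 2 →₀ ℕ}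
    (hd : d ∈ a.support) : d 0 ≡ d 1 [MOD orderOf ζ] := by
  have hc := congrArg (coeff d) h
  rw [coeff_tauDiag] at hc
  have hw : ζ ^ d 0 * ζ⁻¹ ^ d 1 = 1 :=
    Units.val_eq_one.mp ((mul_eq_right₀ (mem_support_iff.mp hd)).mp hc)
  rw [inv_pow, mul_inv_eq_one] at hw
  exact pow_eq_pow_iff_modEq.mp hw

theorem eq_filter_add_sigmaSwap_filter_add_filter {a : MvPolynomial (Fin 2) (ZMod p)}
    (h : sigmaSwap p a = a) :
    a = a.filter (fun d => d 1 < d 0) + sigmaSwap p (a.filter (fun d => d 1 < d 0)) +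
      a.filter (fun d => d 0 = d 1) := by
  ext e
  have hswap : coeff (e.equivMapDomain (Equiv.swap 0 1)) a = coeff e a := by
    rw [← coeff_sigmaSwap, h]
  simp only [coeff_add, coeff_sigmaSwap, coeff_filter, Finsupp.equivMapDomain_apply,
    Equiv.symm_swap, Equiv.swap_apply_left, Equiv.swap_apply_right, hswap]
  split_ifs <;> (try omega) <;> simp

theorem monomial_one_add_sigmaSwap_mem_adjoin {n : ℕ} {d : Fin 2 →₀ ℕ} (hd : d 0 ≡ d 1 [MOD n]) :
    monomial d (1 : ZMod p) + sigmaSwap p (monomial d 1) ∈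
      Algebra.adjoin (ZMod p) {X 0 * X 1, X 0 ^ n + X 1 ^ n} := by
  have hσ : sigmaSwap p (monomial d 1) = X 0 ^ d 1 * X 1 ^ d 0 := by
    simp [monomial_one_fin_two, sigmaSwap, mul_comm]
  rw [hσ, monomial_one_fin_two]
  exact pow_mul_pow_add_pow_mul_pow_mem (Algebra.subset_adjoin (by simp))
    (Algebra.subset_adjoin (by simp)) hd

theorem monomial_one_mem_adjoin_of_eq {n : ℕ} {d : Fin 2 →₀ ℕ} (hd : d 0 = d 1) :
    monomial d (1 : ZMod p) ∈ Algebra.adjoin (ZMod p) {X 0 * X 1, X 0 ^ n + X 1 ^ n} := by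
  rw [monomial_one_fin_two, ← hd, ← mul_pow]
  exact pow_mem (Algebra.subset_adjoin (by simp)) _

theorem mem_adjoin_of_sigmaSwap_eq_of_tauDiag_eq [Fact p.Prime] {ζ : (ZMod p)ˣ}
    {a : MvPolynomial (Fin 2) (ZMod p)} (hσ : sigmaSwap p a = a) (hτ : tauDiag p ζ a = a) :
    a ∈ Algebra.adjoin (ZMod p) {X 0 * X 1, X 0 ^ orderOf ζ + X 1 ^ orderOf ζ} := by
  set S := Algebra.adjoin (ZMod p)
    {(X 0 * X 1 : MvPolynomial (Fin 2) (ZMod p)), X 0 ^ orderOf ζ + X 1 ^ orderOf ζ}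
  rw [eq_filter_add_sigmaSwap_filter_add_filter hσ]
  refine add_mem ?_ ?_
  · refine map_mem_of_forall_monomial_mem (LinearMap.id + (sigmaSwap p).toLinearMap)
      (S := Subalgebra.toSubmodule S)
      (φ := a.filter fun d => d 1 < d 0) fun d hd => ?_
    rw [mem_support_filter] at hd
    exact monomial_one_add_sigmaSwap_mem_adjoin (modEq_of_tauDiag_eq_self hτ hd.1)
  · exact map_mem_of_forall_monomial_mem LinearMap.id (S := Subalgebra.toSubmodule S)
      (φ := a.filter fun d => d 0 = d 1)
      fun d hd => monomial_one_mem_adjoin_of_eq (mem_support_filter.mp hd).2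

theorem adjoin_le_equalizer_sigmaSwap (n : ℕ) :
    Algebra.adjoin (ZMod p) {X 0 * X 1, X 0 ^ n + X 1 ^ n} ≤
      AlgHom.equalizer (sigmaSwap p) (AlgHom.id _ _) := by
  refine Algebra.adjoin_le ?_
  simp [Set.insert_subset_iff, sigmaSwap, mul_comm, add_comm]

theorem adjoin_le_equalizer_tauDiag (ζ : (ZMod p)ˣ) :
    Algebra.adjoin (ZMod p) {X 0 * X 1, X 0 ^ orderOf ζ + X 1 ^ orderOf ζ} ≤
      AlgHom.equalizer (tauDiag p ζ) (AlgHom.id _ _) := by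
  refine Algebra.adjoin_le (Set.insert_subset_iff.mpr ⟨?_, Set.singleton_subset_iff.mpr ?_⟩) <;>
    simp only [SetLike.mem_coe, AlgHom.mem_equalizer, AlgHom.id_apply, tauDiag, map_mul, map_add,
      map_pow, aeval_X, Matrix.cons_val_zero, Matrix.cons_val_one, Matrix.cons_val_fin_one]
  · rw [mul_mul_mul_comm, ← C_mul, Units.mul_inv, C_1, one_mul]
  · rw [mul_pow, mul_pow, ← C_pow, ← C_pow, ← Units.val_pow_eq_pow_val, ← Units.val_pow_eq_pow_val,
      inv_pow, pow_orderOf_eq_one, inv_one, Units.val_one, C_1, one_mul, one_mul]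

end

theorem stmt3_general (p : ℕ) (hp : p.Prime) (n : ℕ)
    (ζ : (ZMod p)ˣ) (hζ : orderOf ζ = n) (a : MvPolynomial (Fin 2) (ZMod p)) :
    (sigmaSwap p a = a ∧ tauDiag p ζ a = a) ↔
      a ∈ Algebra.adjoin (ZMod p) {X 0 * X 1, X 0 ^ n + X 1 ^ n} := by
  have : Fact p.Prime := ⟨hp⟩
  subst hζ
  exact ⟨fun h => mem_adjoin_of_sigmaSwap_eq_of_tauDiag_eq h.1 h.2,
    fun ha => ⟨adjoin_le_equalizer_sigmaSwap _ ha, adjoin_le_equalizer_tauDiag ζ ha⟩⟩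

theorem stmt3 (p : ℕ) (hp : p.Prime) (n : ℕ) (hn : 1 ≤ n)
    (ζ : (ZMod p)ˣ) (hζ : orderOf ζ = n) (a : MvPolynomial (Fin 2) (ZMod p)) :
    (sigmaSwap p a = a ∧ tauDiag p ζ a = a) ↔
      a ∈ Algebra.adjoin (ZMod p) {X 0 * X 1, X 0 ^ n + X 1 ^ n} :=
  stmt3_general p hp n ζ hζ a
end

section
/- Let F = ZMod 11, A = F[X,Y], D the unique F-linear derivation of A with D(X) = X^11 and D(Y) = Y^11, and S = Algebra.adjoin F {X*Y, X^5 + Y^5}. Let B = F[Y₂, Y₆, Y₁₀] be a polynomial ring in three variables and φ : B → A an F-algebra homomorphism such that φ(Y₂) = X*Y, φ(Y₆) ∈ S is homogeneous of total degree 6, and φ(Y₁₀) ∈ S is homogeneous of total degree 10. Then for every g ∈ B with φ(g) = D(X*Y), the coefficient of the monomial Y₂·Y₁₀ in g is nonzero. -/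
/-!
Compare the coefficients of `X¹¹Y` on both sides of `φ g = D(XY) = XY¹¹ + X¹¹Y`, where the right
side contributes `1`. Since `φ` respects the grading with `Y₂, Y₆, Y₁₀` of degrees `2, 6, 10`,
only the monomials `Y₂⁶, Y₂³Y₆, Y₆², Y₂Y₁₀` of `g` can contribute. Elements of `S` only involve
monomials `XᵃYᵇ` with `a ≡ b (mod 5)`, so no monomial of `φ(Y₆)` is a pure power of `X`, i.e.
`Y ∣ φ(Y₆)`. Hence `Y²` divides the images of the first three monomials, and the coefficient of
`X¹¹Y` in `φ g` is the coefficient of `Y₂Y₁₀` in `g` times that of `X¹⁰` in `φ(Y₁₀)`.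
-/

open MvPolynomial

/-- Over a field containing a primitive fifth root of unity `ζ`, `X` and `Y` are eigencoordinates
of the rotation of order 5 in `I₂(5)`, which scales them by `ζ` and `ζ⁻¹`; the invariant
monomials are those of weight `0`. -/
def rotationWeight : Fin 2 → ZMod 5 := ![1, -1]

section

variable {σ R : Type*} [CommSemiring R]

theorem isWeightedHomogeneous_rotationWeight_of_mem_adjoin {p : MvPolynomial (Fin 2) R}
    (hp : p ∈ Algebra.adjoin R {X 0 * X 1, X 0 ^ 5 + X 1 ^ 5}) :
    IsWeightedHomogeneous rotationWeight p 0 := by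
  have hX (i : Fin 2) := isWeightedHomogeneous_X R rotationWeight i
  induction hp using Algebra.adjoin_induction with
  | mem p hp =>
    rcases hp with rfl | rfl
    · simpa [rotationWeight] using (hX 0).mul (hX 1)
    · refine IsWeightedHomogeneous.add ?_ ?_
      · convert (hX 0).pow 5; decide
      · convert (hX 1).pow 5; decide
  | algebraMap r => exact isWeightedHomogeneous_C _ r
  | add p q _ _ hp hq => exact hp.add hq
  | mul p q _ _ hp hq => simpa using hp.mul hq

theorem X_one_dvd_of_isHomogeneous {p : MvPolynomial (Fin 2) R} {n : ℕ}
    (hrot : IsWeightedHomogeneous rotationWeight p 0) (hp : p.IsHomogeneous n)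
    (hn : ¬ 5 ∣ n) : X 1 ∣ p := by
  rw [← Ideal.mem_span_singleton, ← Set.image_singleton, mem_ideal_span_X_image]
  intro m hm
  refine ⟨1, rfl, fun hm1 => hn ?_⟩
  have hdeg : m 0 + m 1 = n := by
    simpa [Finsupp.weight_apply, Finsupp.sum_fintype, Fin.sum_univ_two] using
      hp (mem_support_iff.mp hm)
  have hw := hrot (mem_support_iff.mp hm)
  rw [Finsupp.weight_apply, Finsupp.sum_fintype _ _ (by simp), Fin.sum_univ_two] at hw
  simp only [rotationWeight, hm1] at hw
  rw [← ZMod.natCast_eq_zero_iff, ← hdeg, hm1]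
  simpa using hw

theorem coeff_eq_zero_of_X_pow_dvd [DecidableEq σ] {p : MvPolynomial σ R} {i : σ} {k : ℕ}
    (hp : X i ^ k ∣ p) {m : σ →₀ ℕ} (hm : m i < k) : coeff m p = 0 := by
  obtain ⟨q, rfl⟩ := hp
  rw [X_pow_eq_monomial, coeff_monomial_mul', if_neg]
  exact fun h => hm.not_ge (by simpa using h i)

theorem AlgHom.map_monomial_one {S : Type*} [CommSemiring S] [Algebra R S] [Fintype σ]
    (φ : MvPolynomial σ R →ₐ[R] S) (u : σ →₀ ℕ) :
    φ (monomial u 1) = ∏ i, φ (X i) ^ u i := by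
  rw [monomial_eq, C_1, one_mul, map_finsuppProd, Finsupp.prod_fintype _ _ (by simp)]
  simp only [map_pow]

theorem coeff_X_zero_mul_X_one_mul (p : MvPolynomial (Fin 2) R) :
    coeff (Finsupp.single 0 11 + Finsupp.single 1 1) (X 0 * X 1 * p) =
      coeff (Finsupp.single 0 10) p := by
  have hsub : Finsupp.single 0 11 + Finsupp.single 1 1 - (Finsupp.single 0 1 + Finsupp.single 1 1)
      = (Finsupp.single 0 10 : Fin 2 →₀ ℕ) := by
    ext i; fin_cases i <;> simp
  rw [X, X, monomial_mul, one_mul, coeff_monomial_mul', if_pos, hsub, one_mul]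
  intro i; fin_cases i <;> simp

theorem coeff_derivation_X_zero_mul_X_one
    (D : Derivation R (MvPolynomial (Fin 2) R) (MvPolynomial (Fin 2) R))
    (hDX : D (X 0) = X 0 ^ 11) (hDY : D (X 1) = X 1 ^ 11) :
    coeff (Finsupp.single 0 11 + Finsupp.single 1 1) (D (X 0 * X 1)) = 1 := by
  rw [Derivation.leibniz, hDX, hDY, smul_eq_mul, smul_eq_mul, coeff_add, X_pow_eq_monomial,
    X_pow_eq_monomial, X, X, monomial_mul, monomial_mul, coeff_monomial, coeff_monomial,
    if_neg, if_pos (add_comm _ _)]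
  · simp
  · intro h
    simpa using DFunLike.congr_fun h 1

end

theorem two_le_of_weighted_degree_eq_twelve {u : Fin 3 →₀ ℕ}
    (hu : u ≠ Finsupp.single 0 1 + Finsupp.single 2 1) (hdeg : 2 * u 0 + 6 * u 1 + 10 * u 2 = 12) :
    2 ≤ u 0 + u 1 := by
  by_contra! h
  refine hu (Finsupp.ext fun i => ?_)
  fin_cases i <;> simp <;> omega

section

variable {R : Type*} [CommSemiring R] {φ : MvPolynomial (Fin 3) R →ₐ[R] MvPolynomial (Fin 2) R}
  (h2 : φ (X 0) = X 0 * X 1) (hY : X 1 ∣ φ (X 1))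
  (h6 : (φ (X 1)).IsHomogeneous 6) (h10 : (φ (X 2)).IsHomogeneous 10)
include h2 hY h6 h10

theorem coeff_map_monomial_eq_zero {u : Fin 3 →₀ ℕ}
    (hu : u ≠ Finsupp.single 0 1 + Finsupp.single 2 1) :
    coeff (Finsupp.single 0 11 + Finsupp.single 1 1) (φ (monomial u 1)) = 0 := by
  rw [AlgHom.map_monomial_one, Fin.prod_univ_three, h2]
  by_cases hdeg : 2 * u 0 + 6 * u 1 + 10 * u 2 = 12
  · have hdvd : X 1 ^ (u 0 + u 1) ∣ (X 0 * X 1) ^ u 0 * φ (X 1) ^ u 1 := by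
      rw [pow_add]
      exact mul_dvd_mul (pow_dvd_pow_of_dvd (dvd_mul_left _ _) _) (pow_dvd_pow_of_dvd hY _)
    refine coeff_eq_zero_of_X_pow_dvd ((pow_dvd_pow _
      (two_le_of_weighted_degree_eq_twelve hu hdeg)).trans (hdvd.mul_right _)) (by simp)
  · have hXY : (X 0 * X 1 : MvPolynomial (Fin 2) R).IsHomogeneous 2 :=
      (isHomogeneous_X R 0).mul (isHomogeneous_X R 1)
    refine ((hXY.pow _).mul (h6.pow _) |>.mul (h10.pow _)).coeff_eq_zero ?_
    simp only [Finsupp.degree_eq_sum, Fin.sum_univ_two, Finsupp.coe_add, Pi.add_apply,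
      Finsupp.single_eq_same, Finsupp.single_eq_of_ne, ne_eq, zero_ne_one, one_ne_zero,
      not_false_eq_true, add_zero, zero_add]
    omega

theorem coeff_map_eq_coeff_mul_coeff (g : MvPolynomial (Fin 3) R) :
    coeff (Finsupp.single 0 11 + Finsupp.single 1 1) (φ g) =
      coeff (Finsupp.single 0 1 + Finsupp.single 2 1) g * coeff (Finsupp.single 0 10) (φ (X 2)) := by
  induction g using MvPolynomial.induction_on' with
  | monomial u a =>
    rw [← mul_one a, ← smul_eq_mul, ← smul_monomial, map_smul, coeff_smul, coeff_smul,
      smul_eq_mul, smul_eq_mul, mul_assoc, coeff_monomial]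
    split_ifs with hu
    · subst hu
      rw [one_mul, AlgHom.map_monomial_one, Fin.prod_univ_three, h2]
      simp [coeff_X_zero_mul_X_one_mul]
    · rw [coeff_map_monomial_eq_zero h2 hY h6 h10 hu, zero_mul, mul_zero]
  | add p q hp hq => rw [map_add, coeff_add, coeff_add, hp, hq, add_mul]

end

theorem stmt6
    (D : Derivation (ZMod 11) (MvPolynomial (Fin 2) (ZMod 11)) (MvPolynomial (Fin 2) (ZMod 11)))
    (hDX : D (X 0) = X 0 ^ 11) (hDY : D (X 1) = X 1 ^ 11)
    (φ : MvPolynomial (Fin 3) (ZMod 11) →ₐ[ZMod 11] MvPolynomial (Fin 2) (ZMod 11))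
    (h2 : φ (X 0) = X 0 * X 1)
    (h6 : φ (X 1) ∈ Algebra.adjoin (ZMod 11) {X 0 * X 1, X 0 ^ 5 + X 1 ^ 5} ∧
      (φ (X 1)).IsHomogeneous 6)
    (h10 : φ (X 2) ∈ Algebra.adjoin (ZMod 11) {X 0 * X 1, X 0 ^ 5 + X 1 ^ 5} ∧
      (φ (X 2)).IsHomogeneous 10)
    (g : MvPolynomial (Fin 3) (ZMod 11)) (hg : φ g = D (X 0 * X 1)) :
    coeff (Finsupp.single (0 : Fin 3) 1 + Finsupp.single 2 1) g ≠ 0 := by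
  have hY : X 1 ∣ φ (X 1) :=
    X_one_dvd_of_isHomogeneous (isWeightedHomogeneous_rotationWeight_of_mem_adjoin h6.1) h6.2
      (by norm_num)
  have hcoeff := coeff_map_eq_coeff_mul_coeff h2 hY h6.2 h10.2 g
  rw [hg, coeff_derivation_X_zero_mul_X_one D hDX hDY] at hcoeff
  intro h
  rw [h, zero_mul] at hcoeff
  exact absurd hcoeff (by decide)
end

section
/- Let F = ZMod 31, A = F[X,Y], D the unique F-linear derivation of A with D(X) = X^31 and D(Y) = Y^31, and S = Algebra.adjoin F {X*Y, X^5 + Y^5}. Let C = F[Z₂, Z₁₂, Z₂₀, Z₃₀] and χ : C → A an F-algebra homomorphism with χ(Z₂) = X*Y and χ(Z₁₂), χ(Z₂₀), χ(Z₃₀) ∈ S homogeneous of total degrees 12, 20, 30 respectively. Suppose some g ∈ C satisfies χ(g) = D(X*Y) and the coefficient of Z₂·Z₃₀ in g is zero. Then for every h ∈ C with χ(h) = D(χ(Z₂₀)), the coefficient of the monomial Z₂₀·Z₃₀ in h is nonzero. -/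
/-!
Restrict to first order along the axis `Y = 0`, i.e. look at `w(t, 0)` and `∂w/∂Y (t, 0)`.
Every element of `S` is fixed by `X ↦ ζX, Y ↦ ζ⁻¹Y` with `ζ⁵ = 1`, so its monomials `XᵃYᵇ` have
`a ≡ b (mod 5)`; together with homogeneity this leaves, for `χ(z₂), χ(z₁₂), χ(z₂₀), χ(z₃₀)`, only
the terms `XY`, `β X¹¹Y`, `ε X²⁰`, `ρ X³⁰`. The coefficient of `X³¹Y` in
`χ(g) = D(XY) = X³¹Y + XY³¹` is then `c(z₂z₃₀) ρ + c(z₁₂z₂₀) εβ = 1`, and `c(z₂z₃₀) = 0` forces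
`ε ≠ 0`. The coefficient of `X⁵⁰` in `χ(h) = D(χ z₂₀) = X³¹ ∂χ(z₂₀)/∂X + Y³¹ ∂χ(z₂₀)/∂Y` is
`c(z₂₀z₃₀) ερ = 20ε ≠ 0`.
-/

open MvPolynomial

theorem Derivation.apply_algHom_eq_sum_pderiv {R B σ : Type*} [CommSemiring R] [CommSemiring B]
    [Algebra R B] [Fintype σ] (f : MvPolynomial σ R →ₐ[R] B) (d : Derivation R B B)
    (P : MvPolynomial σ R) : d (f P) = ∑ i, f (pderiv i P) * d (f (X i)) := by
  classical
  induction P using MvPolynomial.induction_on with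
  | C a => simp
  | add p q hp hq => simp [hp, hq, add_mul, Finset.sum_add_distrib]
  | mul_X p j hp =>
    simp only [map_mul, Derivation.leibniz, smul_eq_mul, hp, pderiv_X, map_add, add_mul,
      Finset.sum_add_distrib, Finset.mul_sum, Pi.single_apply, apply_ite f, map_zero, mul_ite,
      mul_one, mul_zero, ite_mul, zero_mul, Finset.sum_ite_eq, Finset.mem_univ, if_true, mul_assoc]

theorem MvPolynomial.aeval_monomial_eq_polynomial_monomial {R σ : Type*} [CommSemiring R]
    (w : σ → ℕ) (a : σ → R) (m : σ →₀ ℕ) (c : R) :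
    aeval (fun i => Polynomial.monomial (w i) (a i)) (monomial m c) =
      Polynomial.monomial (Finsupp.weight w m) (c * m.prod fun i k => a i ^ k) := by
  simp only [aeval_monomial, Finsupp.prod, Finsupp.weight_apply, Finsupp.sum,
    ← Polynomial.C_mul_X_pow_eq_monomial, mul_pow, Finset.prod_mul_distrib, ← map_pow, ← map_prod,
    ← pow_mul, Finset.prod_pow_eq_pow_sum, smul_eq_mul, map_mul, Polynomial.algebraMap_eq,
    mul_comm (w _)]
  ring

theorem MvPolynomial.coeff_aeval_polynomial_monomial {R σ : Type*} [CommSemiring R]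
    (w : σ → ℕ) (a : σ → R) (P : MvPolynomial σ R) (m₀ : σ →₀ ℕ)
    (h : ∀ m ≠ m₀, Finsupp.weight w m = Finsupp.weight w m₀ → (m.prod fun i k => a i ^ k) = 0) :
    (aeval (fun i => Polynomial.monomial (w i) (a i)) P).coeff (Finsupp.weight w m₀) =
      coeff m₀ P * m₀.prod fun i k => a i ^ k := by
  classical
  conv_lhs => rw [P.as_sum]
  simp only [map_sum, aeval_monomial_eq_polynomial_monomial, Polynomial.finsetSum_coeff,
    Polynomial.coeff_monomial]
  rw [Finset.sum_eq_single m₀]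
  · simp
  · intro m _ hm
    split_ifs with hw
    · rw [h m hm hw, mul_zero]
    · rfl
  · intro hm
    simp [notMem_support_iff.mp hm]

section AxisRestriction

variable {R : Type*} [CommSemiring R]

noncomputable def restrictToAxis : MvPolynomial (Fin 2) R →ₐ[R] Polynomial R :=
  aeval ![Polynomial.X, 0]

@[simp] theorem restrictToAxis_X_zero :
    restrictToAxis (X 0 : MvPolynomial (Fin 2) R) = Polynomial.X := by
  simp [restrictToAxis]

@[simp] theorem restrictToAxis_X_one : restrictToAxis (X 1 : MvPolynomial (Fin 2) R) = 0 := by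
  simp [restrictToAxis]

theorem coeff_restrictToAxis (w : MvPolynomial (Fin 2) R) (n : ℕ) :
    (restrictToAxis w).coeff n = coeff (Finsupp.single 0 n) w := by
  have hv : (![Polynomial.X, 0] : Fin 2 → Polynomial R) =
      fun i => Polynomial.monomial (![1, 0] i) (![1, 0] i) := by
    ext1 i; fin_cases i <;> simp [Polynomial.X]
  have key := coeff_aeval_polynomial_monomial ![1, 0] ![(1 : R), 0] w (Finsupp.single 0 n) ?_
  · simpa [restrictToAxis, hv, Finsupp.weight_single] using key
  · intro m hm hw
    rw [Finsupp.prod_pow, Fin.prod_univ_two]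
    have hm1 : m 1 ≠ 0 := by
      intro hm1
      apply hm
      ext i
      fin_cases i <;> simp_all [Finsupp.weight_eq_sum, Fin.sum_univ_two]
    simp [zero_pow hm1]

theorem restrictToAxis_eq_monomial {w : MvPolynomial (Fin 2) R} {d : ℕ} (hw : w.IsHomogeneous d) :
    restrictToAxis w = Polynomial.monomial d (coeff (Finsupp.single 0 d) w) := by
  ext n
  rw [coeff_restrictToAxis, Polynomial.coeff_monomial]
  split_ifs with hn
  · rw [hn]
  · exact hw.coeff_eq_zero (by simpa using Ne.symm hn)

theorem restrictToAxis_pderiv_one_eq_monomial {w : MvPolynomial (Fin 2) R} {d : ℕ}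
    (hw : w.IsHomogeneous (d + 1)) :
    restrictToAxis (pderiv 1 w) =
      Polynomial.monomial d (coeff (Finsupp.single 0 d + Finsupp.single 1 1) w) := by
  ext n
  rw [coeff_restrictToAxis, coeff_pderiv, Polynomial.coeff_monomial]
  split_ifs with hn
  · simp [hn]
  · rw [hw.coeff_eq_zero (by simpa [map_add, Finsupp.degree_single] using Ne.symm hn), zero_mul]

theorem coeff_restrictToAxis_pderiv_zero (w : MvPolynomial (Fin 2) R) (n : ℕ) :
    (restrictToAxis (pderiv 0 w)).coeff n = coeff (Finsupp.single 0 (n + 1)) w * (n + 1) := by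
  rw [coeff_restrictToAxis, coeff_pderiv, Finsupp.single_add]
  simp

end AxisRestriction

section DihedralInvariants

noncomputable def dihedralInvariants (R : Type*) [CommSemiring R] :
    Subalgebra R (MvPolynomial (Fin 2) R) :=
  Algebra.adjoin R {X 0 * X 1, X 0 ^ 5 + X 1 ^ 5}

variable {R : Type*} [CommSemiring R]

theorem isWeightedHomogeneous_of_mem_dihedralInvariants {w : MvPolynomial (Fin 2) R}
    (hw : w ∈ dihedralInvariants R) : IsWeightedHomogeneous (![1, -1] : Fin 2 → ZMod 5) w 0 := by
  have hX (i : Fin 2) := isWeightedHomogeneous_X R (![1, -1] : Fin 2 → ZMod 5) i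
  induction hw using Algebra.adjoin_induction with
  | mem x hx =>
    rcases hx with rfl | rfl
    · simpa using (hX 0).mul (hX 1)
    · have h5 (i : Fin 2) : IsWeightedHomogeneous (![1, -1] : Fin 2 → ZMod 5)
          (X i ^ 5 : MvPolynomial (Fin 2) R) 0 := by
        convert (hX i).pow 5 using 1; fin_cases i <;> decide
      exact (h5 0).add (h5 1)
  | algebraMap r => exact isWeightedHomogeneous_C _ r
  | add x y _ _ hx hy => exact hx.add hy
  | mul x y _ _ hx hy => simpa using hx.mul hy

theorem restrictToAxis_eq_zero_of_mem_dihedralInvariants {w : MvPolynomial (Fin 2) R} {d : ℕ}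
    (hS : w ∈ dihedralInvariants R) (hw : w.IsHomogeneous d) (hd : (d : ZMod 5) ≠ 0) :
    restrictToAxis w = 0 := by
  rw [restrictToAxis_eq_monomial hw,
    (isWeightedHomogeneous_of_mem_dihedralInvariants hS).coeff_eq_zero, map_zero]
  simpa [Finsupp.weight_single] using hd

theorem restrictToAxis_pderiv_one_eq_zero_of_mem_dihedralInvariants {w : MvPolynomial (Fin 2) R}
    {d : ℕ} (hS : w ∈ dihedralInvariants R) (hw : w.IsHomogeneous (d + 1))
    (hd : (d : ZMod 5) ≠ 1) :
    restrictToAxis (pderiv 1 w) = 0 := by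
  rw [restrictToAxis_pderiv_one_eq_monomial hw,
    (isWeightedHomogeneous_of_mem_dihedralInvariants hS).coeff_eq_zero, map_zero]
  simpa [Finsupp.weight_single, add_neg_eq_zero] using hd

end DihedralInvariants

section InvariantRestriction

variable {R : Type*} [CommSemiring R]

theorem coeff_aeval_monomial_weights_20_30 (e ρ : R) (P : MvPolynomial (Fin 4) R) (k l : ℕ)
    (huniq : ∀ k' l', 20 * k' + 30 * l' = 20 * k + 30 * l → k' = k ∧ l' = l) :
    (aeval (fun i => Polynomial.monomial (![0, 0, 20, 30] i) (![0, 0, e, ρ] i)) P).coeff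
        (20 * k + 30 * l) =
      coeff (Finsupp.single 2 k + Finsupp.single 3 l) P * (e ^ k * ρ ^ l) := by
  have key := coeff_aeval_polynomial_monomial ![0, 0, 20, 30] ![0, 0, e, ρ] P
    (Finsupp.single 2 k + Finsupp.single 3 l) ?_
  · simpa [Finsupp.weight_eq_sum, Fin.sum_univ_four, Finsupp.prod_pow, Fin.prod_univ_four,
      mul_comm] using key
  · intro m hm hw
    simp only [Finsupp.weight_eq_sum, Fin.sum_univ_four] at hw
    simp only [Finsupp.prod_pow, Fin.prod_univ_four]
    by_contra hne
    have h0 : m 0 = 0 := by by_contra h; simp [zero_pow h] at hne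
    have h1 : m 1 = 0 := by by_contra h; simp [zero_pow h] at hne
    obtain ⟨h2, h3⟩ := huniq (m 2) (m 3) (by simpa [h0, h1, mul_comm] using hw)
    apply hm
    ext i
    fin_cases i <;> simp [h0, h1, h2, h3]

theorem restrictToAxis_comp_eq (χ : MvPolynomial (Fin 4) R →ₐ[R] MvPolynomial (Fin 2) R)
    (h2 : χ (X 0) = X 0 * X 1) (h12 : χ (X 1) ∈ dihedralInvariants R)
    (h12' : (χ (X 1)).IsHomogeneous 12) (h20 : (χ (X 2)).IsHomogeneous 20)
    (h30 : (χ (X 3)).IsHomogeneous 30) :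
    restrictToAxis.comp χ = aeval fun i => Polynomial.monomial (![0, 0, 20, 30] i)
      (![0, 0, coeff (Finsupp.single 0 20) (χ (X 2)),
        coeff (Finsupp.single 0 30) (χ (X 3))] i) := by
  refine algHom_ext fun i => ?_
  fin_cases i
  · simp [h2]
  · simpa using restrictToAxis_eq_zero_of_mem_dihedralInvariants h12 h12' (by decide)
  · simpa using restrictToAxis_eq_monomial h20
  · simpa using restrictToAxis_eq_monomial h30

theorem restrictToAxis_pderiv_one_comp_X
    (χ : MvPolynomial (Fin 4) R →ₐ[R] MvPolynomial (Fin 2) R)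
    (h2 : χ (X 0) = X 0 * X 1) (h12 : (χ (X 1)).IsHomogeneous 12)
    (h20 : χ (X 2) ∈ dihedralInvariants R) (h20' : (χ (X 2)).IsHomogeneous 20)
    (h30 : χ (X 3) ∈ dihedralInvariants R) (h30' : (χ (X 3)).IsHomogeneous 30) (i : Fin 4) :
    restrictToAxis (pderiv 1 (χ (X i))) = ![Polynomial.monomial 1 1,
      Polynomial.monomial 11 (coeff (Finsupp.single 0 11 + Finsupp.single 1 1) (χ (X 1))),
      0, 0] i := by
  fin_cases i
  · simp [h2, pderiv_X, Polynomial.X]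
  · exact restrictToAxis_pderiv_one_eq_monomial (d := 11) h12
  · exact restrictToAxis_pderiv_one_eq_zero_of_mem_dihedralInvariants (d := 19) h20 h20'
      (by decide)
  · exact restrictToAxis_pderiv_one_eq_zero_of_mem_dihedralInvariants (d := 29) h30 h30'
      (by decide)

theorem coeff_thirtyOne_restrictToAxis_pderiv_one_comp
    {χ : MvPolynomial (Fin 4) R →ₐ[R] MvPolynomial (Fin 2) R} {e ρ β : R}
    (hχ : restrictToAxis.comp χ =
      aeval fun i => Polynomial.monomial (![0, 0, 20, 30] i) (![0, 0, e, ρ] i))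
    (hχ' : ∀ i, restrictToAxis (pderiv 1 (χ (X i))) =
      ![Polynomial.monomial 1 1, Polynomial.monomial 11 β, 0, 0] i)
    (P : MvPolynomial (Fin 4) R) :
    (restrictToAxis (pderiv 1 (χ P))).coeff 31 =
      coeff (Finsupp.single 0 1 + Finsupp.single 3 1) P * ρ +
        coeff (Finsupp.single 1 1 + Finsupp.single 2 1) P * (e * β) := by
  have h30 := coeff_aeval_monomial_weights_20_30 e ρ (pderiv 0 P) 0 1 (by omega)
  have h20 := coeff_aeval_monomial_weights_20_30 e ρ (pderiv 1 P) 1 0 (by omega)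
  have c0 := Polynomial.coeff_mul_monomial (restrictToAxis (χ (pderiv 0 P))) 1 30 1
  have c1 := Polynomial.coeff_mul_monomial (restrictToAxis (χ (pderiv 1 P))) 11 20 β
  simp only [← hχ, AlgHom.comp_apply, coeff_pderiv] at h30 h20
  norm_num at c0 c1
  rw [Derivation.apply_algHom_eq_sum_pderiv χ (pderiv 1) P]
  simp [Fin.sum_univ_four, hχ', c0, c1, h30, h20, mul_assoc]
  rw [add_comm (Finsupp.single (3 : Fin 4) 1), add_comm (Finsupp.single (2 : Fin 4) 1)]

theorem coeff_fifty_restrictToAxis_comp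
    {χ : MvPolynomial (Fin 4) R →ₐ[R] MvPolynomial (Fin 2) R} {e ρ : R}
    (hχ : restrictToAxis.comp χ =
      aeval fun i => Polynomial.monomial (![0, 0, 20, 30] i) (![0, 0, e, ρ] i))
    (P : MvPolynomial (Fin 4) R) :
    (restrictToAxis (χ P)).coeff 50 =
      coeff (Finsupp.single 2 1 + Finsupp.single 3 1) P * (e * ρ) := by
  simpa [← hχ] using coeff_aeval_monomial_weights_20_30 e ρ P 1 1 (by omega)

end InvariantRestriction

section Derivation

variable {R : Type*} [CommSemiring R] {q : ℕ}
  (D : Derivation R (MvPolynomial (Fin 2) R) (MvPolynomial (Fin 2) R))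

theorem coeff_restrictToAxis_derivation (hq : q ≠ 0) (hDX : D (X 0) = X 0 ^ q)
    (hDY : D (X 1) = X 1 ^ q) (w : MvPolynomial (Fin 2) R) (n : ℕ) :
    (restrictToAxis (D w)).coeff (n + q) = coeff (Finsupp.single 0 (n + 1)) w * (n + 1) := by
  have hD := Derivation.apply_algHom_eq_sum_pderiv (AlgHom.id R _) D w
  simp only [AlgHom.id_apply, Fin.sum_univ_two, hDX, hDY] at hD
  simp [hD, zero_pow hq, Polynomial.coeff_mul_X_pow, coeff_restrictToAxis_pderiv_zero]

theorem restrictToAxis_pderiv_one_derivation_X_mul_X (hq : 2 ≤ q) (hDX : D (X 0) = X 0 ^ q)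
    (hDY : D (X 1) = X 1 ^ q) :
    restrictToAxis (pderiv 1 (D (X 0 * X 1))) = Polynomial.X ^ q := by
  simp [Derivation.leibniz, hDX, hDY, pderiv_X, zero_pow (show q - 1 ≠ 0 by omega)]

end Derivation

theorem stmt9
    (D : Derivation (ZMod 31) (MvPolynomial (Fin 2) (ZMod 31)) (MvPolynomial (Fin 2) (ZMod 31)))
    (hDX : D (X 0) = X 0 ^ 31) (hDY : D (X 1) = X 1 ^ 31)
    (χ : MvPolynomial (Fin 4) (ZMod 31) →ₐ[ZMod 31] MvPolynomial (Fin 2) (ZMod 31))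
    (h2 : χ (X 0) = X 0 * X 1)
    (h12 : χ (X 1) ∈ Algebra.adjoin (ZMod 31) {X 0 * X 1, X 0 ^ 5 + X 1 ^ 5} ∧
      (χ (X 1)).IsHomogeneous 12)
    (h20 : χ (X 2) ∈ Algebra.adjoin (ZMod 31) {X 0 * X 1, X 0 ^ 5 + X 1 ^ 5} ∧
      (χ (X 2)).IsHomogeneous 20)
    (h30 : χ (X 3) ∈ Algebra.adjoin (ZMod 31) {X 0 * X 1, X 0 ^ 5 + X 1 ^ 5} ∧
      (χ (X 3)).IsHomogeneous 30)
    (g : MvPolynomial (Fin 4) (ZMod 31)) (hg : χ g = D (X 0 * X 1))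
    (hzero : coeff (Finsupp.single (0 : Fin 4) 1 + Finsupp.single 3 1) g = 0)
    (h : MvPolynomial (Fin 4) (ZMod 31)) (hh : χ h = D (χ (X 2))) :
    coeff (Finsupp.single (2 : Fin 4) 1 + Finsupp.single 3 1) h ≠ 0 := by
  intro hcontra
  have hχ := restrictToAxis_comp_eq χ h2 h12.1 h12.2 h20.2 h30.2
  have hχ' := restrictToAxis_pderiv_one_comp_X χ h2 h12.2 h20.1 h20.2 h30.1 h30.2
  have hg31 := coeff_thirtyOne_restrictToAxis_pderiv_one_comp hχ hχ' g
  rw [hg, restrictToAxis_pderiv_one_derivation_X_mul_X D (by norm_num) hDX hDY, hzero,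
    Polynomial.coeff_X_pow_self, zero_mul, zero_add] at hg31
  have hh50 := coeff_fifty_restrictToAxis_comp hχ h
  rw [hh, coeff_restrictToAxis_derivation D (q := 31) (by norm_num) hDX hDY _ 19, hcontra,
    zero_mul] at hh50
  have he : coeff (Finsupp.single 0 20) (χ (X 2)) ≠ 0 :=
    left_ne_zero_of_mul (right_ne_zero_of_mul (ne_of_eq_of_ne hg31.symm (by decide)))
  have h20ne : ((19 : ℕ) + 1 : ZMod 31) ≠ 0 := by decide
  have : Fact (Nat.Prime 31) := ⟨by norm_num⟩
  exact he ((mul_eq_zero.mp hh50).resolve_right h20ne)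
end

section
/- Let F = ZMod 23 and A = F[t₁,…,t₅]. Let c₅ = t₁t₂t₃t₄t₅ and let p_k (1 ≤ k ≤ 4) be the k-th elementary symmetric polynomial in t₁²,…,t₅². Then every element of Algebra.adjoin F {p₁,p₂,p₃,p₄,c₅} that is homogeneous of total degree 9 is an F-linear combination of p₁²·c₅ and p₂·c₅. -/
/-!
If each `g i` is homogeneous of degree `w i`, then taking the degree-`n` component of `aeval g P`
amounts to taking the `w`-weighted component of weight `n` of `P`. So a degree-9 element of the
algebra generated by `p₁, p₂, p₃, p₄, c₅` (degrees `2, 4, 6, 8, 5`) is the image of a polynomial of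
weight 9 in five variables, and the only monomials of weight 9 are `x₁² x₅` and `x₂ x₅`.
-/

open MvPolynomial

/-- The `k`-th elementary symmetric polynomial in `t₁², …, t₅²` over `ZMod 23`. -/
noncomputable def pSpin (k : ℕ) : MvPolynomial (Fin 5) (ZMod 23) :=
  ∑ s ∈ Finset.powersetCard k Finset.univ, ∏ i ∈ s, (X i) ^ 2

/-- `c₅ = t₁t₂t₃t₄t₅` over `ZMod 23`. -/
noncomputable def cSpin : MvPolynomial (Fin 5) (ZMod 23) := ∏ i, X i

namespace MvPolynomial

variable {σ ι R : Type*} [CommSemiring R] {g : ι → MvPolynomial σ R} {w : ι → ℕ}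

theorem isHomogeneous_aeval_monomial (hg : ∀ i, (g i).IsHomogeneous (w i)) (d : ι →₀ ℕ) (r : R) :
    (aeval g (monomial d r)).IsHomogeneous (Finsupp.weight w d) := by
  rw [aeval_monomial, Finsupp.weight_apply, ← zero_add (Finsupp.sum _ _)]
  refine (isHomogeneous_C _ r).mul (IsHomogeneous.prod _ _ _ fun i _ ↦ ?_)
  simpa [mul_comm] using (hg i).pow (d i)

theorem homogeneousComponent_aeval (hg : ∀ i, (g i).IsHomogeneous (w i)) (n : ℕ)
    (P : MvPolynomial ι R) :
    homogeneousComponent n (aeval g P) = aeval g (weightedHomogeneousComponent w n P) := by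
  induction P using MvPolynomial.induction_on' with
  | monomial d r =>
    rw [homogeneousComponent_of_mem (isHomogeneous_aeval_monomial hg d r),
      weightedHomogeneousComponent_of_mem (isWeightedHomogeneous_monomial w d r rfl)]
    split_ifs <;> simp_all
  | add P Q hP hQ => simp only [map_add, hP, hQ]

theorem exists_isWeightedHomogeneous_aeval_eq_of_mem_adjoin
    (hg : ∀ i, (g i).IsHomogeneous (w i)) {n : ℕ} {p : MvPolynomial σ R}
    (hp : p ∈ Algebra.adjoin R (Set.range g)) (hpn : p.IsHomogeneous n) :
    ∃ Q : MvPolynomial ι R, Q.IsWeightedHomogeneous w n ∧ aeval g Q = p := by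
  rw [Algebra.adjoin_range_eq_range_aeval] at hp
  obtain ⟨P, rfl : aeval g P = p⟩ := hp
  exact ⟨weightedHomogeneousComponent w n P,
    weightedHomogeneousComponent_isWeightedHomogeneous n P,
    by rw [← homogeneousComponent_aeval hg, homogeneousComponent_eq_self hpn]⟩

end MvPolynomial

theorem isHomogeneous_pSpin (k : ℕ) : (pSpin k).IsHomogeneous (2 * k) :=
  IsHomogeneous.sum _ _ _ fun s hs ↦ by
    simpa [(Finset.mem_powersetCard.mp hs).2, mul_comm] using
      IsHomogeneous.prod s _ (fun _ ↦ 2) fun i _ ↦ (isHomogeneous_X _ i).pow 2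

theorem isHomogeneous_cSpin : cSpin.IsHomogeneous 5 := by
  have h := IsHomogeneous.prod (Finset.univ : Finset (Fin 5)) X (fun _ ↦ 1)
    fun i _ ↦ isHomogeneous_X (ZMod 23) i
  rwa [Finset.sum_const, Finset.card_univ, Fintype.card_fin] at h

noncomputable def spinGenerators : Fin 5 → MvPolynomial (Fin 5) (ZMod 23) :=
  ![pSpin 1, pSpin 2, pSpin 3, pSpin 4, cSpin]

def spinDegrees : Fin 5 → ℕ := ![2, 4, 6, 8, 5]

theorem isHomogeneous_spinGenerators (i : Fin 5) :
    (spinGenerators i).IsHomogeneous (spinDegrees i) := by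
  fin_cases i
  exacts [isHomogeneous_pSpin 1, isHomogeneous_pSpin 2, isHomogeneous_pSpin 3,
    isHomogeneous_pSpin 4, isHomogeneous_cSpin]

theorem range_spinGenerators :
    Set.range spinGenerators = {pSpin 1, pSpin 2, pSpin 3, pSpin 4, cSpin} := by
  ext p
  simp only [spinGenerators, Set.mem_range, Fin.exists_fin_succ, Fin.exists_fin_zero]
  simp [eq_comm]

theorem weight_spinDegrees_eq_nine {m : Fin 5 →₀ ℕ} (hm : Finsupp.weight spinDegrees m = 9) :
    m = Finsupp.single 0 2 + Finsupp.single 4 1 ∨ m = Finsupp.single 1 1 + Finsupp.single 4 1 := by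
  rw [Finsupp.weight_apply, Finsupp.sum_fintype _ _ (by simp)] at hm
  simp [Fin.sum_univ_five, spinDegrees] at hm
  obtain ⟨h01 | h01, h2, h3, h4⟩ :
      (m 0 = 2 ∧ m 1 = 0 ∨ m 0 = 0 ∧ m 1 = 1) ∧ m 2 = 0 ∧ m 3 = 0 ∧ m 4 = 1 := by
    omega
  · left; ext i; fin_cases i <;> simp_all
  · right; ext i; fin_cases i <;> simp_all

theorem aeval_spinGenerators_mem_span {Q : MvPolynomial (Fin 5) (ZMod 23)}
    (hQ : Q.IsWeightedHomogeneous spinDegrees 9) :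
    aeval spinGenerators Q ∈ Submodule.span (ZMod 23) {pSpin 1 ^ 2 * cSpin, pSpin 2 * cSpin} := by
  induction hQ using IsWeightedHomogeneous.induction_on with
  | zero => simp
  | add p q _ _ hp hq => rw [map_add]; exact add_mem hp hq
  | monomial d r hd =>
    rw [aeval_monomial, ← Algebra.smul_def]
    refine Submodule.smul_mem _ r (Submodule.subset_span ?_)
    rcases weight_spinDegrees_eq_nine hd with rfl | rfl <;>
      simp [spinGenerators, Fin.prod_univ_five, Finsupp.single_apply]

theorem stmt12 (d : MvPolynomial (Fin 5) (ZMod 23))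
    (hd : d ∈ Algebra.adjoin (ZMod 23) {pSpin 1, pSpin 2, pSpin 3, pSpin 4, cSpin})
    (hhom : d.IsHomogeneous 9) :
    ∃ a b : ZMod 23, d = C a * pSpin 1 ^ 2 * cSpin + C b * pSpin 2 * cSpin := by
  rw [← range_spinGenerators] at hd
  obtain ⟨Q, hQ, rfl⟩ :=
    exists_isWeightedHomogeneous_aeval_eq_of_mem_adjoin isHomogeneous_spinGenerators hd hhom
  obtain ⟨a, b, hab⟩ := Submodule.mem_span_pair.mp (aeval_spinGenerators_mem_span hQ)
  exact ⟨a, b, by rw [← hab]; simp [Algebra.smul_def, mul_assoc]⟩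
end

section
/- Let F = ZMod 37 and A = F[t₁,…,t₈]. Let c_k be the k-th elementary symmetric polynomial in t₁,…,t₈ and p_k the k-th elementary symmetric polynomial in t₁²,…,t₈². Set h₂ = (3·2⁻¹)c₃, h₃ = −2⁻¹(5c₅ + c₂c₃), h₄ = 2⁻¹(7c₇ + 3c₂c₅ − c₃c₄), h₅ = −2⁻¹(5c₂c₇ − 3c₃c₆ + c₄c₅), h₆ = −2⁻¹(5c₃c₈ − 3c₄c₇ + c₅c₆), h₇ = 2⁻¹(3c₅c₈ − c₆c₇). Let φ : A → A be an F-algebra homomorphism with φ(c₁) = −c₁, φ(c₂) = c₂, φ(c₈) = c₈ − 4⁻¹c₁c₇, and φ(p_i) ≡ p_i + c₁·h_i modulo the ideal (c₁²) for i = 2,…,7. Then, modulo the ideal (c₁², c₂): φ(p₂²p₃) ≡ p₂²p₃ + c₁(6c₃³c₄ − 12c₃c₄c₆ − 10c₄²c₅); φ(p₂p₅) ≡ p₂p₅ + c₁(3c₃²c₇ + (3·2⁻¹)c₃c₅² − c₄²c₅); φ(p₃c₈) ≡ p₃c₈ + c₁(−4⁻¹c₃²c₇ − (5·2⁻¹)c₅c₈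 + 2⁻¹c₆c₇); and φ(p₃p₄) ≡ p₃p₄ + c₁(−2⁻¹c₃³c₄ + (7·2⁻¹)c₃²c₇ + c₃c₄c₆ + 5c₃c₅² − (5·2⁻¹)c₄²c₅ − 5c₅c₈ − 7c₆c₇). -/
open MvPolynomial

/-- The `k`-th elementary symmetric polynomial in `t₁, …, t₈` over `ZMod 37`. -/
noncomputable def cE8 (k : ℕ) : MvPolynomial (Fin 8) (ZMod 37) :=
  ∑ s ∈ Finset.powersetCard k Finset.univ, ∏ i ∈ s, X i

/-- The `k`-th elementary symmetric polynomial in `t₁², …, t₈²` over `ZMod 37`. -/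
noncomputable def pE8 (k : ℕ) : MvPolynomial (Fin 8) (ZMod 37) :=
  ∑ s ∈ Finset.powersetCard k Finset.univ, ∏ i ∈ s, (X i) ^ 2

/-- The polynomials `h₂, …, h₇` of Hamanaka–Kono. -/
noncomputable def hE8 : ℕ → MvPolynomial (Fin 8) (ZMod 37)
  | 2 => C (3 * (2 : ZMod 37)⁻¹) * cE8 3
  | 3 => -C (2 : ZMod 37)⁻¹ * (5 * cE8 5 + cE8 2 * cE8 3)
  | 4 => C (2 : ZMod 37)⁻¹ * (7 * cE8 7 + 3 * cE8 2 * cE8 5 - cE8 3 * cE8 4)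
  | 5 => -C (2 : ZMod 37)⁻¹ * (5 * cE8 2 * cE8 7 - 3 * cE8 3 * cE8 6 + cE8 4 * cE8 5)
  | 6 => -C (2 : ZMod 37)⁻¹ * (5 * cE8 3 * cE8 8 - 3 * cE8 4 * cE8 7 + cE8 5 * cE8 6)
  | 7 => C (2 : ZMod 37)⁻¹ * (3 * cE8 5 * cE8 8 - cE8 6 * cE8 7)
  | _ => 0

/-! Modulo `c₁²` we have `φ f ≡ f + c₁ δf` for `f = c₈, p₂, …, p₇`, and the first-order terms
obey the Leibniz rule `δ(fg) = δf · g + f · δg`. Since `δ` only enters multiplied by `c₁`, it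
only matters modulo `(c₁, c₂)`. There the identities `p_k = ∑_{i+j=2k} (-1)^(k+j) c_i c_j`, read
off from `∏ (1 - t_i² X²) = ∏ (1 + t_i X) · ∏ (1 - t_i X)`, express `p₂, …, p₅` through
`c₃, …, c₈`, and each claim becomes a polynomial identity over `ℤ[1/2]`. -/

section EsymmSq

open Finset

variable {R : Type*} [CommRing R]

theorem Multiset.esymm_cons_succ (a : R) (s : Multiset R) (k : ℕ) :
    (a ::ₘ s).esymm (k + 1) = s.esymm (k + 1) + a * s.esymm k := by
  simp only [esymm, powersetCard_cons, map_add, sum_add, map_map, Function.comp_def, prod_cons,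
    sum_map_mul_left]

theorem Multiset.coeff_prod_one_add_C_mul_X (s : Multiset R) (k : ℕ) :
    (s.map fun r => 1 + Polynomial.C r * Polynomial.X).prod.coeff k = s.esymm k := by
  induction s using Multiset.induction_on generalizing k with
  | empty => cases k <;> simp [esymm, Polynomial.coeff_one, powersetCard_zero_right]
  | cons a s ih =>
    rw [map_cons, prod_cons, add_mul, one_mul, mul_assoc]
    cases k with
    | zero => simp [ih, esymm]
    | succ k =>
      rw [Polynomial.coeff_add, Polynomial.coeff_C_mul, Polynomial.coeff_X_mul, ih, ih,
        esymm_cons_succ]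

theorem Multiset.esymm_map_sq (s : Multiset R) (k : ℕ) :
    (s.map (· ^ 2)).esymm k =
      ∑ ij ∈ HasAntidiagonal.antidiagonal (2 * k),
        (-1) ^ (k + ij.2) * (s.esymm ij.1 * s.esymm ij.2) := by
  let gen : Multiset R → Polynomial R := fun t =>
    (t.map fun r => 1 + Polynomial.C r * Polynomial.X).prod
  have hexpand :
      Polynomial.expand R 2 (gen ((s.map (· ^ 2)).map Neg.neg)) = gen s * gen (s.map Neg.neg) := by
    simp only [gen, map_multiset_prod, map_map, ← prod_map_mul]
    congr 1
    refine map_congr rfl fun r _ => ?_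
    rw [Function.comp_apply, Function.comp_apply, _root_.map_add, map_one, _root_.map_mul,
      Polynomial.expand_C, Polynomial.expand_X]
    simp only [Function.comp_apply, Polynomial.C_neg, Polynomial.C_pow]
    ring
  have hcoeff := congrArg (Polynomial.coeff · (2 * k)) hexpand
  simp only [gen, Polynomial.coeff_expand_mul' two_pos, Polynomial.coeff_mul,
    coeff_prod_one_add_C_mul_X, esymm_neg] at hcoeff
  calc (s.map (· ^ 2)).esymm k = (-1) ^ k * ((-1) ^ k * (s.map (· ^ 2)).esymm k) := by
        rw [← mul_assoc, ← mul_pow, neg_one_mul, neg_neg, one_pow, one_mul]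
    _ = _ := by
        rw [hcoeff, mul_sum]
        exact sum_congr rfl fun ij _ => by ring

end EsymmSq

section FirstOrder

variable {R : Type*} [CommRing R] {ε c x y f g d e d' : R}

theorem mul_sub_add_mul_mem_span_sq (hx : x - (f + ε * d) ∈ Ideal.span {ε ^ 2})
    (hy : y - (g + ε * e) ∈ Ideal.span {ε ^ 2}) :
    x * y - (f * g + ε * (d * g + f * e)) ∈ Ideal.span {ε ^ 2} := by
  obtain ⟨a, ha⟩ := Ideal.mem_span_singleton'.mp hx
  obtain ⟨b, hb⟩ := Ideal.mem_span_singleton'.mp hy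
  refine Ideal.mem_span_singleton'.mpr ⟨a * y + (f + ε * d) * b + d * e, ?_⟩
  linear_combination y * ha + (f + ε * d) * hb

theorem sq_sub_add_mul_mem_span_sq (hx : x - (f + ε * d) ∈ Ideal.span {ε ^ 2}) :
    x ^ 2 - (f ^ 2 + ε * (2 * f * d)) ∈ Ideal.span {ε ^ 2} := by
  convert mul_sub_add_mul_mem_span_sq hx hx using 2 <;> ring

theorem sub_add_mul_mem_span_sq_pair (hx : x - (f + ε * d) ∈ Ideal.span {ε ^ 2})
    (hd : d - d' ∈ Ideal.span {ε, c}) : x - (f + ε * d') ∈ Ideal.span {ε ^ 2, c} := by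
  obtain ⟨a, ha⟩ := Ideal.mem_span_singleton'.mp hx
  obtain ⟨u, v, huv⟩ := Ideal.mem_span_pair.mp hd
  refine Ideal.mem_span_pair.mpr ⟨a + u, ε * v, ?_⟩
  linear_combination ha + ε * huv

end FirstOrder

section ElementarySymmetricE8

open Finset

theorem cE8_eq_esymm (k : ℕ) : cE8 k = (univ.val.map (X : Fin 8 → _)).esymm k := by
  rw [Finset.esymm_map_val]; rfl

theorem pE8_eq_esymm (k : ℕ) :
    pE8 k = ((univ.val.map (X : Fin 8 → _)).map (· ^ 2)).esymm k := by
  rw [Multiset.map_map, Finset.esymm_map_val]; rfl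

theorem pE8_eq_sum (k : ℕ) :
    pE8 k = ∑ ij ∈ HasAntidiagonal.antidiagonal (2 * k),
      (-1) ^ (k + ij.2) * (cE8 ij.1 * cE8 ij.2) := by
  simp only [pE8_eq_esymm, Multiset.esymm_map_sq, cE8_eq_esymm]

theorem cE8_zero : cE8 0 = 1 := by simp [cE8]

theorem cE8_eq_zero_of_lt {k : ℕ} (hk : 8 < k) : cE8 k = 0 := by
  rw [cE8, powersetCard_eq_empty.mpr (by simpa using hk), sum_empty]

theorem pE8_two : pE8 2 = cE8 2 ^ 2 - 2 * cE8 1 * cE8 3 + 2 * cE8 4 := by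
  simp only [pE8_eq_sum, Nat.sum_antidiagonal_eq_sum_range_succ_mk, sum_range_succ, sum_range_zero,
    tsub_self, cE8_zero]
  ring

theorem pE8_three : pE8 3 = cE8 3 ^ 2 - 2 * cE8 2 * cE8 4 + 2 * cE8 1 * cE8 5 - 2 * cE8 6 := by
  simp only [pE8_eq_sum, Nat.sum_antidiagonal_eq_sum_range_succ_mk, sum_range_succ, sum_range_zero,
    tsub_self, cE8_zero]
  ring

theorem pE8_four :
    pE8 4 = cE8 4 ^ 2 - 2 * cE8 3 * cE8 5 + 2 * cE8 2 * cE8 6 - 2 * cE8 1 * cE8 7 + 2 * cE8 8 := by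
  simp only [pE8_eq_sum, Nat.sum_antidiagonal_eq_sum_range_succ_mk, sum_range_succ, sum_range_zero,
    tsub_self, cE8_zero]
  ring

theorem pE8_five :
    pE8 5 = cE8 5 ^ 2 - 2 * cE8 4 * cE8 6 + 2 * cE8 3 * cE8 7 - 2 * cE8 2 * cE8 8 := by
  simp only [pE8_eq_sum, Nat.sum_antidiagonal_eq_sum_range_succ_mk, sum_range_succ, sum_range_zero,
    tsub_self, cE8_zero, cE8_eq_zero_of_lt (by norm_num : 8 < 9),
    cE8_eq_zero_of_lt (by norm_num : 8 < 10)]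
  ring

end ElementarySymmetricE8

theorem two_mul_C_inv_two {σ : Type*} : (2 : MvPolynomial σ (ZMod 37)) * C 2⁻¹ = 1 := by
  rw [← map_ofNat C 2, ← map_mul, ZMod.mul_inv_of_unit 2 (by decide), map_one]

theorem C_inv_four {σ : Type*} : (C (4 : ZMod 37)⁻¹ : MvPolynomial σ (ZMod 37)) = C 2⁻¹ ^ 2 := by
  have : Fact (Nat.Prime 37) := ⟨by norm_num⟩
  rw [← map_pow, inv_pow]
  norm_num

local notation "π" => Ideal.Quotient.mk (Ideal.span {cE8 1, cE8 2})

theorem two_mul_mk_C_inv_two : 2 * π (C 2⁻¹) = 1 := by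
  rw [← map_ofNat π 2, ← map_mul, two_mul_C_inv_two, map_one]

theorem mk_cE8_one : π (cE8 1) = 0 :=
  Ideal.Quotient.eq_zero_iff_mem.mpr (Ideal.subset_span (by simp))

theorem mk_cE8_two : π (cE8 2) = 0 :=
  Ideal.Quotient.eq_zero_iff_mem.mpr (Ideal.subset_span (by simp))

theorem mk_pE8_two : π (pE8 2) = 2 * π (cE8 4) := by
  simp [pE8_two, mk_cE8_one, mk_cE8_two, map_ofNat]

theorem mk_pE8_three : π (pE8 3) = π (cE8 3) ^ 2 - 2 * π (cE8 6) := by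
  simp [pE8_three, mk_cE8_one, mk_cE8_two, map_ofNat]

theorem mk_pE8_four :
    π (pE8 4) = π (cE8 4) ^ 2 - 2 * π (cE8 3) * π (cE8 5) + 2 * π (cE8 8) := by
  simp [pE8_four, mk_cE8_one, mk_cE8_two, map_ofNat]

theorem mk_pE8_five :
    π (pE8 5) = π (cE8 5) ^ 2 - 2 * π (cE8 4) * π (cE8 6) + 2 * π (cE8 3) * π (cE8 7) := by
  simp [pE8_five, mk_cE8_two, map_ofNat]

theorem mk_hE8_two : π (hE8 2) = 3 * π (C 2⁻¹) * π (cE8 3) := by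
  simp [hE8, map_ofNat]

theorem mk_hE8_three : π (hE8 3) = -5 * π (C 2⁻¹) * π (cE8 5) := by
  simp only [hE8, map_neg, map_mul, map_add, map_ofNat, mk_cE8_two]
  ring

theorem mk_hE8_four : π (hE8 4) = π (C 2⁻¹) * (7 * π (cE8 7) - π (cE8 3) * π (cE8 4)) := by
  simp [hE8, mk_cE8_two, map_ofNat]

theorem mk_hE8_five :
    π (hE8 5) = π (C 2⁻¹) * (3 * π (cE8 3) * π (cE8 6) - π (cE8 4) * π (cE8 5)) := by
  simp only [hE8, map_neg, map_mul, map_add, map_sub, map_ofNat, mk_cE8_two]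
  ring

theorem stmt13_general
    (φ : MvPolynomial (Fin 8) (ZMod 37) →ₐ[ZMod 37] MvPolynomial (Fin 8) (ZMod 37))
    (hc8 : φ (cE8 8) = cE8 8 - C (4 : ZMod 37)⁻¹ * cE8 1 * cE8 7)
    (hp : ∀ i, 2 ≤ i → i ≤ 7 →
      φ (pE8 i) - (pE8 i + cE8 1 * hE8 i) ∈ Ideal.span {cE8 1 ^ 2}) :
    (φ (pE8 2 ^ 2 * pE8 3) -
        (pE8 2 ^ 2 * pE8 3 +
          cE8 1 * (6 * cE8 3 ^ 3 * cE8 4 - 12 * cE8 3 * cE8 4 * cE8 6 -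
            10 * cE8 4 ^ 2 * cE8 5)) ∈ Ideal.span {cE8 1 ^ 2, cE8 2}) ∧
    (φ (pE8 2 * pE8 5) -
        (pE8 2 * pE8 5 +
          cE8 1 * (3 * cE8 3 ^ 2 * cE8 7 + C (3 * (2 : ZMod 37)⁻¹) * cE8 3 * cE8 5 ^ 2 -
            cE8 4 ^ 2 * cE8 5)) ∈ Ideal.span {cE8 1 ^ 2, cE8 2}) ∧
    (φ (pE8 3 * cE8 8) -
        (pE8 3 * cE8 8 +
          cE8 1 * (-C (4 : ZMod 37)⁻¹ * cE8 3 ^ 2 * cE8 7 -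
            C (5 * (2 : ZMod 37)⁻¹) * cE8 5 * cE8 8 +
            C (2 : ZMod 37)⁻¹ * cE8 6 * cE8 7)) ∈ Ideal.span {cE8 1 ^ 2, cE8 2}) ∧
    (φ (pE8 3 * pE8 4) -
        (pE8 3 * pE8 4 +
          cE8 1 * (-C (2 : ZMod 37)⁻¹ * cE8 3 ^ 3 * cE8 4 +
            C (7 * (2 : ZMod 37)⁻¹) * cE8 3 ^ 2 * cE8 7 + cE8 3 * cE8 4 * cE8 6 +
            5 * cE8 3 * cE8 5 ^ 2 - C (5 * (2 : ZMod 37)⁻¹) * cE8 4 ^ 2 * cE8 5 -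
            5 * cE8 5 * cE8 8 - 7 * cE8 6 * cE8 7)) ∈ Ideal.span {cE8 1 ^ 2, cE8 2}) := by
  have hp2 := hp 2 (by norm_num) (by norm_num)
  have hp3 := hp 3 (by norm_num) (by norm_num)
  have hp4 := hp 4 (by norm_num) (by norm_num)
  have hp5 := hp 5 (by norm_num) (by norm_num)
  have hc8' : φ (cE8 8) - (cE8 8 + cE8 1 * (-C (4 : ZMod 37)⁻¹ * cE8 7)) ∈
      Ideal.span {cE8 1 ^ 2} := by
    convert (Ideal.span _).zero_mem using 1
    rw [hc8]
    ring
  simp only [map_mul φ, map_pow φ]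
  refine ⟨sub_add_mul_mem_span_sq_pair
      (mul_sub_add_mul_mem_span_sq (sq_sub_add_mul_mem_span_sq hp2) hp3) ?_,
    sub_add_mul_mem_span_sq_pair (mul_sub_add_mul_mem_span_sq hp2 hp5) ?_,
    sub_add_mul_mem_span_sq_pair (mul_sub_add_mul_mem_span_sq hp3 hc8') ?_,
    sub_add_mul_mem_span_sq_pair (mul_sub_add_mul_mem_span_sq hp3 hp4) ?_⟩
  -- Modulo `(c₁, c₂)` both sides become polynomials in `u = π (C 2⁻¹)` agreeing at `u = 1/2`;
  -- each certificate is their difference divided by `2u - 1`.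
  all_goals
    rw [← Ideal.Quotient.eq]
    simp only [map_add, map_sub, map_mul, map_neg, map_pow, map_ofNat, C_inv_four, mk_pE8_two,
      mk_pE8_three, mk_pE8_four, mk_pE8_five, mk_hE8_two, mk_hE8_three, mk_hE8_four, mk_hE8_five]
  · linear_combination (6 * π (cE8 3) ^ 3 * π (cE8 4) - 12 * π (cE8 3) * π (cE8 4) * π (cE8 6)
      - 10 * π (cE8 4) ^ 2 * π (cE8 5)) * two_mul_mk_C_inv_two
  · linear_combination
      (3 * π (cE8 3) ^ 2 * π (cE8 7) - π (cE8 4) ^ 2 * π (cE8 5)) * two_mul_mk_C_inv_two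
  · linear_combination π (C 2⁻¹) * π (cE8 6) * π (cE8 7) * two_mul_mk_C_inv_two
  · linear_combination (5 * π (cE8 3) * π (cE8 5) ^ 2 - 5 * π (cE8 5) * π (cE8 8)
      - 7 * π (cE8 6) * π (cE8 7) + π (cE8 3) * π (cE8 4) * π (cE8 6)) * two_mul_mk_C_inv_two

theorem stmt13
    (φ : MvPolynomial (Fin 8) (ZMod 37) →ₐ[ZMod 37] MvPolynomial (Fin 8) (ZMod 37))
    (hc1 : φ (cE8 1) = -cE8 1) (hc2 : φ (cE8 2) = cE8 2)
    (hc8 : φ (cE8 8) = cE8 8 - C (4 : ZMod 37)⁻¹ * cE8 1 * cE8 7)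
    (hp : ∀ i, 2 ≤ i → i ≤ 7 →
      φ (pE8 i) - (pE8 i + cE8 1 * hE8 i) ∈ Ideal.span {cE8 1 ^ 2}) :
    (φ (pE8 2 ^ 2 * pE8 3) -
        (pE8 2 ^ 2 * pE8 3 +
          cE8 1 * (6 * cE8 3 ^ 3 * cE8 4 - 12 * cE8 3 * cE8 4 * cE8 6 -
            10 * cE8 4 ^ 2 * cE8 5)) ∈ Ideal.span {cE8 1 ^ 2, cE8 2}) ∧
    (φ (pE8 2 * pE8 5) -
        (pE8 2 * pE8 5 +
          cE8 1 * (3 * cE8 3 ^ 2 * cE8 7 + C (3 * (2 : ZMod 37)⁻¹) * cE8 3 * cE8 5 ^ 2 -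
            cE8 4 ^ 2 * cE8 5)) ∈ Ideal.span {cE8 1 ^ 2, cE8 2}) ∧
    (φ (pE8 3 * cE8 8) -
        (pE8 3 * cE8 8 +
          cE8 1 * (-C (4 : ZMod 37)⁻¹ * cE8 3 ^ 2 * cE8 7 -
            C (5 * (2 : ZMod 37)⁻¹) * cE8 5 * cE8 8 +
            C (2 : ZMod 37)⁻¹ * cE8 6 * cE8 7)) ∈ Ideal.span {cE8 1 ^ 2, cE8 2}) ∧
    (φ (pE8 3 * pE8 4) -
        (pE8 3 * pE8 4 +
          cE8 1 * (-C (2 : ZMod 37)⁻¹ * cE8 3 ^ 3 * cE8 4 +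
            C (7 * (2 : ZMod 37)⁻¹) * cE8 3 ^ 2 * cE8 7 + cE8 3 * cE8 4 * cE8 6 +
            5 * cE8 3 * cE8 5 ^ 2 - C (5 * (2 : ZMod 37)⁻¹) * cE8 4 ^ 2 * cE8 5 -
            5 * cE8 5 * cE8 8 - 7 * cE8 6 * cE8 7)) ∈ Ideal.span {cE8 1 ^ 2, cE8 2}) :=
  stmt13_general φ hc8 hp
end

section
/- Let F = ZMod 37 and A = F[t₁,…,t₈]. Let c_k be the k-th elementary symmetric polynomial in t₁,…,t₈ and p_k the k-th elementary symmetric polynomial in t₁²,…,t₈². Set h₂ = (3·2⁻¹)c₃, h₃ = −2⁻¹(5c₅ + c₂c₃), h₄ = 2⁻¹(7c₇ + 3c₂c₅ − c₃c₄), h₅ = −2⁻¹(5c₂c₇ − 3c₃c₆ + c₄c₅), h₆ = −2⁻¹(5c₃c₈ − 3c₄c₇ + c₅c₆), h₇ = 2⁻¹(3c₅c₈ − c₆c₇). Let φ : A → A be an F-algebra homomorphism with φ(c₁) = −c₁, φ(c₂) = c₂, φ(c₈) = c₈ − 4⁻¹c₁c₇, and φ(p_i) ≡ p_i + c₁·h_i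 modulo the ideal (c₁²) for i = 2,…,7. If d ∈ Algebra.adjoin F {p₁,…,p₇,c₈} is homogeneous of total degree 14 and φ(d) ≡ d modulo the ideal (c₁², c₂), then there exists a ∈ F such that d ≡ a·(480p₇ − p₂²p₃ + 40p₂p₅ − 12p₃p₄ + 312p₃c₈) modulo the ideal (p₁). -/
open MvPolynomial

/-!
Modulo `p₁`, the degree-14 part of `F₃₇[p₁, …, p₇, c₈]` is spanned by the five monomials
`p₇, p₂p₅, p₃p₄, p₂²p₃, p₃c₈`. Modulo `(c₁², c₂)` the map `φ` acts as `id + c₁ · D`, where `D`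
obeys the Leibniz rule on these monomials with `D pᵢ = hᵢ`, `D c₈ = -4⁻¹ c₇`, and `φ` fixes
`p₁ = c₁² - 2c₂`. Hence `φ d ≡ d` forces `c₁ · D d ∈ (c₁², c₂)`; differentiating in `t₁` at a point
where `t₁ = c₁ = c₂ = 0` shows that `D d` vanishes there. Four such points give four independent
linear conditions on the five coefficients of `d`, cutting out the line spanned by the given class.
-/

open Finset
open scoped Matrix

theorem MvPolynomial.IsHomogeneous.mem_span_prod_pow_of_mem_adjoin {ι σ R : Type*} [Fintype ι]
    [CommSemiring R] {g : ι → MvPolynomial σ R} {w : ι → ℕ} (hg : ∀ i, (g i).IsHomogeneous (w i))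
    {d : MvPolynomial σ R} {n : ℕ} (hn : d.IsHomogeneous n)
    (hd : d ∈ Algebra.adjoin R (Set.range g)) :
    d ∈ Submodule.span R ((fun e : ι →₀ ℕ => ∏ i, g i ^ e i) '' {e | ∑ i, w i * e i = n}) := by
  classical
  rw [Algebra.adjoin_range_eq_range_aeval] at hd
  obtain ⟨q, rfl⟩ := hd
  have hterm (e : ι →₀ ℕ) :
      (C (coeff e q) * ∏ i, g i ^ e i).IsHomogeneous (∑ i, w i * e i) := by
    simpa only [mul_comm (w _)] using
      (IsHomogeneous.prod _ _ _ fun i _ => (hg i).pow (e i)).C_mul (coeff e q)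
  rw [← homogeneousComponent_eq_self hn]
  change homogeneousComponent n (MvPolynomial.aeval g q) ∈ _
  rw [aeval_def, algebraMap_eq, eval₂_eq', map_sum]
  refine Submodule.sum_mem _ fun e _ => ?_
  rw [homogeneousComponent_of_mem (hterm e)]
  split_ifs with he
  · rw [← smul_eq_C_mul]
    exact Submodule.smul_mem _ _ (Submodule.subset_span ⟨e, he.symm, rfl⟩)
  · exact zero_mem _

theorem MvPolynomial.eval_eq_zero_of_mul_mem_span_sq_pair {σ R : Type*} [CommRing R]
    {f g Y : MvPolynomial σ R} {P : σ → R} (i : σ) (hf : eval P f = 0) (hg : eval P g = 0)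
    (hf' : eval P (pderiv i f) = 1) (hg' : eval P (pderiv i g) = 0)
    (h : f * Y ∈ Ideal.span {f ^ 2, g}) : eval P Y = 0 := by
  obtain ⟨u, v, huv⟩ := Ideal.mem_span_pair.mp h
  have := congrArg (fun z => eval P (pderiv i z)) huv
  simp only [pow_two, Derivation.leibniz, smul_eq_mul, map_add, map_mul, hf, hg, hf', hg'] at this
  simpa using this.symm

theorem mul_add_mul_of_sq_eq_zero {Q : Type*} [CommRing Q] {ε : Q} (hε : ε ^ 2 = 0)
    (x y α β : Q) : (x + ε * α) * (y + ε * β) = x * y + ε * (α * y + x * β) := by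
  linear_combination α * β * hε

theorem cE8_one : cE8 1 = ∑ i, X i := esymm_one _ _

theorem pE8_one : pE8 1 = ∑ i, X i ^ 2 := by simp [pE8, powersetCard_one]

theorem pE8_one_eq_sq_sub : pE8 1 = cE8 1 ^ 2 - 2 * cE8 2 := by
  rw [pE8_one]
  change psum (Fin 8) (ZMod 37) 2 = esymm _ _ 1 ^ 2 - 2 * esymm _ _ 2
  rw [psum_eq_mul_esymm_sub_sum _ _ 2 (by norm_num),
    show antidiagonal 2 = ({(0, 2), (1, 1), (2, 0)} : Finset (ℕ × ℕ)) by decide,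
    show ({(0, 2), (1, 1), (2, 0)} : Finset (ℕ × ℕ)).filter (fun a => a.1 ∈ Set.Ioo 0 2) =
      {(1, 1)} by decide]
  simp only [sum_singleton, psum_one, ← esymm_one]
  ring

theorem thirtySeven_eq_zero : (37 : MvPolynomial (Fin 8) (ZMod 37)) = 0 := by
  exact_mod_cast CharP.cast_eq_zero _ 37

theorem pderiv_cE8_one (i : Fin 8) : pderiv i (cE8 1) = 1 := by
  classical
  simp [cE8_one, pderiv_X, Pi.single_apply]

theorem pderiv_cE8_two (i : Fin 8) : pderiv i (cE8 2) = cE8 1 - X i := by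
  classical
  have h := congrArg (pderiv i) pE8_one_eq_sq_sub
  simp [pE8_one, pderiv_cE8_one, pderiv_X, Pi.single_apply, two_mul] at h
  linear_combination 19 * h - (pderiv i (cE8 2) - cE8 1 + X i) * thirtySeven_eq_zero

theorem isHomogeneous_cE8 (k : ℕ) : (cE8 k).IsHomogeneous k := by
  refine IsHomogeneous.sum _ _ _ fun s hs => ?_
  simpa [(mem_powersetCard.mp hs).2] using
    IsHomogeneous.prod s _ _ fun i _ => isHomogeneous_X (ZMod 37) i

theorem isHomogeneous_pE8 (k : ℕ) : (pE8 k).IsHomogeneous (2 * k) := by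
  refine IsHomogeneous.sum _ _ _ fun s hs => ?_
  simpa [(mem_powersetCard.mp hs).2, mul_comm] using
    IsHomogeneous.prod s _ _ fun i _ => isHomogeneous_X_pow (R := ZMod 37) i 2

theorem eval_cE8 (P : Fin 8 → ZMod 37) (k : ℕ) :
    eval P (cE8 k) = ∑ s ∈ powersetCard k univ, ∏ i ∈ s, P i := by
  simp [cE8]

theorem eval_pE8 (P : Fin 8 → ZMod 37) (k : ℕ) :
    eval P (pE8 k) = ∑ s ∈ powersetCard k univ, ∏ i ∈ s, P i ^ 2 := by
  simp [pE8]

noncomputable def spinGen : Fin 8 → MvPolynomial (Fin 8) (ZMod 37) :=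
  ![pE8 1, pE8 2, pE8 3, pE8 4, pE8 5, pE8 6, pE8 7, cE8 8]

def spinGenDeg : Fin 8 → ℕ := ![2, 4, 6, 8, 10, 12, 14, 8]

theorem isHomogeneous_spinGen (i : Fin 8) : (spinGen i).IsHomogeneous (spinGenDeg i) := by
  fin_cases i <;>
    simp only [spinGen, spinGenDeg, Fin.zero_eta, Fin.mk_one, Fin.reduceFinMk, Matrix.cons_val]
  exacts [isHomogeneous_pE8 1, isHomogeneous_pE8 2, isHomogeneous_pE8 3, isHomogeneous_pE8 4,
    isHomogeneous_pE8 5, isHomogeneous_pE8 6, isHomogeneous_pE8 7, isHomogeneous_cE8 8]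

theorem range_spinGen :
    Set.range spinGen = {pE8 1, pE8 2, pE8 3, pE8 4, pE8 5, pE8 6, pE8 7, cE8 8} := by
  simp only [spinGen, Matrix.range_cons, Matrix.range_empty, Set.singleton_union, Set.union_empty]

theorem weight_fourteen_cases {b c d k f g h : ℕ}
    (H : 4 * b + 6 * c + 8 * d + 10 * k + 12 * f + 14 * g + 8 * h = 14) :
    (b = 0 ∧ c = 0 ∧ d = 0 ∧ k = 0 ∧ f = 0 ∧ g = 1 ∧ h = 0) ∨
      (b = 1 ∧ c = 0 ∧ d = 0 ∧ k = 1 ∧ f = 0 ∧ g = 0 ∧ h = 0) ∨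
      (b = 0 ∧ c = 1 ∧ d = 1 ∧ k = 0 ∧ f = 0 ∧ g = 0 ∧ h = 0) ∨
      (b = 2 ∧ c = 1 ∧ d = 0 ∧ k = 0 ∧ f = 0 ∧ g = 0 ∧ h = 0) ∨
      (b = 0 ∧ c = 1 ∧ d = 0 ∧ k = 0 ∧ f = 0 ∧ g = 0 ∧ h = 1) := by
  have : g ≤ 1 := by omega
  have : f ≤ 1 := by omega
  have : k ≤ 1 := by omega
  have : d ≤ 1 := by omega
  have : h ≤ 1 := by omega
  interval_cases g <;> interval_cases f <;> interval_cases k <;> interval_cases d <;>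
    interval_cases h <;> omega

noncomputable def mono14 : Fin 5 → MvPolynomial (Fin 8) (ZMod 37) :=
  ![pE8 7, pE8 2 * pE8 5, pE8 3 * pE8 4, pE8 2 ^ 2 * pE8 3, pE8 3 * cE8 8]

noncomputable def mono14SpanSup : Submodule (ZMod 37) (MvPolynomial (Fin 8) (ZMod 37)) :=
  Submodule.span (ZMod 37) (Set.range mono14) ⊔
    (Ideal.span {pE8 1}).restrictScalars (ZMod 37)

theorem prod_spinGen_pow_mem {e : Fin 8 →₀ ℕ} (he : ∑ i, spinGenDeg i * e i = 14) :
    ∏ i, spinGen i ^ e i ∈ mono14SpanSup := by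
  have mono_mem (i : Fin 5) : mono14 i ∈ mono14SpanSup :=
    Submodule.mem_sup_left (Submodule.subset_span ⟨i, rfl⟩)
  simp only [Fin.sum_univ_eight, Fin.prod_univ_eight, spinGen, spinGenDeg, Matrix.cons_val] at he ⊢
  generalize e 0 = a, e 1 = b, e 2 = c, e 3 = d, e 4 = k, e 5 = f, e 6 = g, e 7 = h at he ⊢
  rcases Nat.eq_zero_or_pos a with rfl | ha
  · rw [mul_zero, zero_add] at he
    rcases weight_fourteen_cases he with ⟨rfl, rfl, rfl, rfl, rfl, rfl, rfl⟩ |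
      ⟨rfl, rfl, rfl, rfl, rfl, rfl, rfl⟩ | ⟨rfl, rfl, rfl, rfl, rfl, rfl, rfl⟩ |
      ⟨rfl, rfl, rfl, rfl, rfl, rfl, rfl⟩ | ⟨rfl, rfl, rfl, rfl, rfl, rfl, rfl⟩ <;>
      simp only [pow_zero, pow_one, one_mul, mul_one]
    exacts [mono_mem 0, mono_mem 1, mono_mem 2, mono_mem 3, mono_mem 4]
  · refine Submodule.mem_sup_right (Ideal.mem_span_singleton.mpr ?_)
    iterate 7 apply Dvd.dvd.mul_right
    exact dvd_pow_self _ ha.ne'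

theorem exists_eq_sum_mono14_add_pE8_one_mul {d : MvPolynomial (Fin 8) (ZMod 37)}
    (hd : d ∈ Algebra.adjoin (ZMod 37)
      {pE8 1, pE8 2, pE8 3, pE8 4, pE8 5, pE8 6, pE8 7, cE8 8})
    (hhom : d.IsHomogeneous 14) :
    ∃ (μ : Fin 5 → ZMod 37) (r : MvPolynomial (Fin 8) (ZMod 37)),
      d = ∑ i, C (μ i) * mono14 i + pE8 1 * r := by
  rw [← range_spinGen] at hd
  have hmem : d ∈ mono14SpanSup := by
    refine Submodule.span_le.mpr ?_ (hhom.mem_span_prod_pow_of_mem_adjoin isHomogeneous_spinGen hd)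
    rintro _ ⟨e, he, rfl⟩
    exact prod_spinGen_pow_mem he
  obtain ⟨y, hy, z, hz, rfl⟩ := Submodule.mem_sup.mp hmem
  obtain ⟨μ, rfl⟩ := (Submodule.mem_span_range_iff_exists_fun _).mp hy
  obtain ⟨r, rfl⟩ := Ideal.mem_span_singleton'.mp ((Submodule.restrictScalars_mem _ _ _).mp hz)
  exact ⟨μ, r, by simp [smul_eq_C_mul, mul_comm]⟩

-- `D (mono14 i)`, where `D` is the Leibniz operator with `D pᵢ = hᵢ` and `D c₈ = -4⁻¹ c₇`.
noncomputable def mono14Deriv : Fin 5 → MvPolynomial (Fin 8) (ZMod 37) :=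
  ![hE8 7, hE8 2 * pE8 5 + pE8 2 * hE8 5, hE8 3 * pE8 4 + pE8 3 * hE8 4,
    2 * pE8 2 * hE8 2 * pE8 3 + pE8 2 ^ 2 * hE8 3, hE8 3 * cE8 8 - C 4⁻¹ * pE8 3 * cE8 7]

theorem pE8_one_mem : pE8 1 ∈ Ideal.span {cE8 1 ^ 2, cE8 2} := by
  rw [pE8_one_eq_sq_sub]
  exact sub_mem (Ideal.subset_span (by simp)) (Ideal.mul_mem_left _ _ (Ideal.subset_span (by simp)))

section FirstOrder

variable (φ : MvPolynomial (Fin 8) (ZMod 37) →ₐ[ZMod 37] MvPolynomial (Fin 8) (ZMod 37))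

local notation "π" => Ideal.Quotient.mk (Ideal.span {cE8 1 ^ 2, cE8 2})

theorem mk_cE8_one_sq : π (cE8 1) ^ 2 = 0 := by
  rw [← map_pow, Ideal.Quotient.eq_zero_iff_mem]
  exact Ideal.subset_span (by simp)

theorem mk_map_mono14
    (hc8 : φ (cE8 8) = cE8 8 - C (4 : ZMod 37)⁻¹ * cE8 1 * cE8 7)
    (hp : ∀ i, 2 ≤ i → i ≤ 7 →
      φ (pE8 i) - (pE8 i + cE8 1 * hE8 i) ∈ Ideal.span {cE8 1 ^ 2}) (i : Fin 5) :
    π (φ (mono14 i)) = π (mono14 i) + π (cE8 1) * π (mono14Deriv i) := by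
  have hpπ (k : ℕ) (h₁ : 2 ≤ k) (h₂ : k ≤ 7) :
      π (φ (pE8 k)) = π (pE8 k) + π (cE8 1) * π (hE8 k) := by
    rw [← map_mul, ← map_add, Ideal.Quotient.eq]
    exact Ideal.span_mono (by simp) (hp k h₁ h₂)
  have hc8π : π (φ (cE8 8)) = π (cE8 8) + π (cE8 1) * π (-(C 4⁻¹ * cE8 7)) := by
    rw [hc8]; simp only [map_sub, map_mul, map_neg]; ring
  have leibniz := mul_add_mul_of_sq_eq_zero mk_cE8_one_sq
  fin_cases i <;>
    simp only [mono14, mono14Deriv, Fin.zero_eta, Fin.mk_one, Fin.reduceFinMk, Matrix.cons_val,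
      map_mul, sq, hpπ, hc8π, leibniz, Nat.reduceLeDiff] <;>
    simp only [map_add, map_mul, map_sub, map_neg, map_ofNat] <;> ring

theorem cE8_one_mul_mem (hc1 : φ (cE8 1) = -cE8 1) (hc2 : φ (cE8 2) = cE8 2)
    (hc8 : φ (cE8 8) = cE8 8 - C (4 : ZMod 37)⁻¹ * cE8 1 * cE8 7)
    (hp : ∀ i, 2 ≤ i → i ≤ 7 →
      φ (pE8 i) - (pE8 i + cE8 1 * hE8 i) ∈ Ideal.span {cE8 1 ^ 2})
    (μ : Fin 5 → ZMod 37) (r : MvPolynomial (Fin 8) (ZMod 37))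
    (hfix : φ (∑ i, C (μ i) * mono14 i + pE8 1 * r) - (∑ i, C (μ i) * mono14 i + pE8 1 * r) ∈
      Ideal.span {cE8 1 ^ 2, cE8 2}) :
    cE8 1 * ∑ i, C (μ i) * mono14Deriv i ∈ Ideal.span {cE8 1 ^ 2, cE8 2} := by
  have hp1 : φ (pE8 1) = pE8 1 := by
    rw [pE8_one_eq_sq_sub, map_sub, map_mul, map_pow, hc1, hc2, map_ofNat]; ring
  have h := Ideal.Quotient.eq.mpr hfix
  simp only [map_add, map_sum, map_mul, algHom_C, hp1, mk_map_mono14 φ hc8 hp,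
    Ideal.Quotient.eq_zero_iff_mem.mpr pE8_one_mem] at h
  rw [← Ideal.Quotient.eq_zero_iff_mem]
  simp only [map_mul, map_sum, Finset.mul_sum, algebraMap_eq, mul_add, sum_add_distrib, zero_mul,
    add_zero, mul_left_comm (π (cE8 1))] at h ⊢
  linear_combination h

end FirstOrder

theorem two_inv : (2 : ZMod 37)⁻¹ = 19 := ZMod.inv_eq_of_mul_eq_one _ _ _ (by decide)

theorem four_inv : (4 : ZMod 37)⁻¹ = 28 := ZMod.inv_eq_of_mul_eq_one _ _ _ (by decide)

-- Points of `t₁ = c₁ = c₂ = 0`, chosen so that `derivMatrix` has rank 4.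
def points : Fin 4 → Fin 8 → ZMod 37 :=
  ![![0, 1, 1, 1, 1, 3, 12, 18], ![0, 1, 1, 1, 1, 4, 10, 19],
    ![0, 1, 1, 1, 1, 5, 31, 34], ![0, 1, 1, 1, 1, 8, 29, 33]]

def derivMatrix : Matrix (Fin 4) (Fin 5) (ZMod 37) :=
  !![34, 3, 1, 3, 21; 25, 0, 20, 21, 4; 0, 24, 8, 23, 33; 34, 8, 17, 9, 7]

theorem points_apply_zero (j : Fin 4) : points j 0 = 0 := by
  fin_cases j <;> rfl

theorem eval_points_cE8_one (j : Fin 4) : eval (points j) (cE8 1) = 0 := by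
  rw [eval_cE8]; revert j; decide

theorem eval_points_cE8_two (j : Fin 4) : eval (points j) (cE8 2) = 0 := by
  rw [eval_cE8]; revert j; decide

set_option maxRecDepth 1000 in
theorem eval_points_mono14Deriv (j : Fin 4) (i : Fin 5) :
    eval (points j) (mono14Deriv i) = derivMatrix j i := by
  fin_cases i <;>
    simp only [mono14Deriv, Fin.zero_eta, Fin.mk_one, Fin.reduceFinMk, Matrix.cons_val, hE8,
      two_inv, four_inv, map_mul, map_add, map_sub, map_neg, map_ofNat, map_pow, eval_cE8,
      eval_pE8] <;>
    revert j <;> decide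

theorem eval_points_eq_zero_of_cE8_one_mul_mem (j : Fin 4) {Y : MvPolynomial (Fin 8) (ZMod 37)}
    (h : cE8 1 * Y ∈ Ideal.span {cE8 1 ^ 2, cE8 2}) : eval (points j) Y = 0 :=
  eval_eq_zero_of_mul_mem_span_sq_pair 0 (eval_points_cE8_one j) (eval_points_cE8_two j)
    (by simp [pderiv_cE8_one]) (by simp [pderiv_cE8_two, eval_points_cE8_one, points_apply_zero]) h

theorem derivMatrix_mulVec_eq_zero {μ : Fin 5 → ZMod 37}
    (h : cE8 1 * ∑ i, C (μ i) * mono14Deriv i ∈ Ideal.span {cE8 1 ^ 2, cE8 2}) :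
    derivMatrix *ᵥ μ = 0 := by
  funext j
  have := eval_points_eq_zero_of_cE8_one_mul_mem j h
  simpa [Matrix.mulVec, dotProduct, eval_points_mono14Deriv, mul_comm] using this

def kernelVec : Fin 5 → ZMod 37 := ![30, 21, 27, 30, 1]

theorem eq_smul_kernelVec_of_mulVec_eq_zero {μ : Fin 5 → ZMod 37} (h : derivMatrix *ᵥ μ = 0) :
    μ = μ 4 • kernelVec := by
  have row (j : Fin 4) : ∑ i, derivMatrix j i * μ i = 0 := congrFun h j
  have E0 : 34 * μ 0 + 3 * μ 1 + μ 2 + 3 * μ 3 + 21 * μ 4 = 0 := by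
    simpa [Fin.sum_univ_five, derivMatrix] using row 0
  have E1 : 25 * μ 0 + 20 * μ 2 + 21 * μ 3 + 4 * μ 4 = 0 := by
    simpa [Fin.sum_univ_five, derivMatrix] using row 1
  have E2 : 24 * μ 1 + 8 * μ 2 + 23 * μ 3 + 33 * μ 4 = 0 := by
    simpa [Fin.sum_univ_five, derivMatrix] using row 2
  have E3 : 34 * μ 0 + 8 * μ 1 + 17 * μ 2 + 9 * μ 3 + 7 * μ 4 = 0 := by
    simpa [Fin.sum_univ_five, derivMatrix] using row 3
  have h0 : μ 0 = 30 * μ 4 := by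
    linear_combination (norm := (ring_nf; reduce_mod_char)) 8 * E0 + 24 * E1 + 5 * E2 + 19 * E3
  have h1 : μ 1 = 21 * μ 4 := by
    linear_combination (norm := (ring_nf; reduce_mod_char)) 5 * E0 + 8 * E1 + 21 * E2
  have h2 : μ 2 = 27 * μ 4 := by
    linear_combination (norm := (ring_nf; reduce_mod_char)) 2 * E0 + 22 * E1 + 2 * E2 + 21 * E3
  have h3 : μ 3 = 30 * μ 4 := by
    linear_combination (norm := (ring_nf; reduce_mod_char)) 15 * E0 + 21 * E1 + 8 * E2 + 12 * E3
  funext i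
  fin_cases i <;> simp [kernelVec, h0, h1, h2, h3, mul_comm]

theorem sum_kernelVec_mul_mono14 :
    ∑ i, C (kernelVec i) * mono14 i = C 7 * (480 * pE8 7 - pE8 2 ^ 2 * pE8 3 +
      40 * pE8 2 * pE8 5 - 12 * pE8 3 * pE8 4 + 312 * pE8 3 * cE8 8) := by
  simp only [Fin.sum_univ_five, kernelVec, mono14, Matrix.cons_val, map_ofNat, map_one]
  linear_combination (-90 * pE8 7 - 7 * pE8 2 * pE8 5 + 3 * pE8 3 * pE8 4 +
    pE8 2 ^ 2 * pE8 3 - 59 * pE8 3 * cE8 8) * thirtySeven_eq_zero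

theorem stmt14
    (φ : MvPolynomial (Fin 8) (ZMod 37) →ₐ[ZMod 37] MvPolynomial (Fin 8) (ZMod 37))
    (hc1 : φ (cE8 1) = -cE8 1) (hc2 : φ (cE8 2) = cE8 2)
    (hc8 : φ (cE8 8) = cE8 8 - C (4 : ZMod 37)⁻¹ * cE8 1 * cE8 7)
    (hp : ∀ i, 2 ≤ i → i ≤ 7 →
      φ (pE8 i) - (pE8 i + cE8 1 * hE8 i) ∈ Ideal.span {cE8 1 ^ 2})
    (d : MvPolynomial (Fin 8) (ZMod 37))
    (hd : d ∈ Algebra.adjoin (ZMod 37)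
      {pE8 1, pE8 2, pE8 3, pE8 4, pE8 5, pE8 6, pE8 7, cE8 8})
    (hhom : d.IsHomogeneous 14)
    (hfix : φ d - d ∈ Ideal.span {cE8 1 ^ 2, cE8 2}) :
    ∃ a : ZMod 37,
      d - C a * (480 * pE8 7 - pE8 2 ^ 2 * pE8 3 + 40 * pE8 2 * pE8 5 -
        12 * pE8 3 * pE8 4 + 312 * pE8 3 * cE8 8) ∈ Ideal.span {pE8 1} := by
  obtain ⟨μ, r, rfl⟩ := exists_eq_sum_mono14_add_pE8_one_mul hd hhom
  have hμ : μ = μ 4 • kernelVec := eq_smul_kernelVec_of_mulVec_eq_zero <|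
    derivMatrix_mulVec_eq_zero (cE8_one_mul_mem φ hc1 hc2 hc8 hp μ r hfix)
  refine ⟨7 * μ 4, Ideal.mem_span_singleton'.mpr ⟨r, ?_⟩⟩
  have hsum : ∑ i, C (μ i) * mono14 i = C (μ 4) * ∑ i, C (kernelVec i) * mono14 i := by
    conv_lhs => rw [hμ]
    simp only [Pi.smul_apply, smul_eq_mul, map_mul, mul_assoc, Finset.mul_sum]
  rw [hsum, sum_kernelVec_mul_mono14, map_mul]
  ring
end
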